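/- arXiv:hep-th/9611053 — 4 statements merged into one kernel-verified Lean document; each statement's English description precedes it below -/
import Mathlib

section
/- Fix integers N, k, d with N − k ≥ 1 and d ≥ 1. Let L^{d'}_m ∈ ℚ (for 1 ≤ d' ≤ d and m ∈ ℤ) satisfy L^{d'}_m = 0 unless 0 ≤ m ≤ N−1−(N−k)d'. Then the coefficients γ^{N,k,d'}_m defined by the closed formula satisfy, for every 1 ≤ d' ≤ d and every m ∈ ℤ, the recursion γ^{N,k,d'}_m − γ^{N,k,d'}_{m+1} = L^{d'}_m − Σ_{d''=1}^{d'−1} L^{d'−d''}_m · γ^{N,k,d''}_{m+(N−k)(d'−d'')}, and moreover γ^{N,k,d'}_m = 0 whenever m > N−1−(N−k)d'. -/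
/-- The closed-formula coefficient `γ^{N,k,d}_m` from the paper:
`γ^{N,k,d}_m = Σ_{l=1}^{d} (−1)^{l−1} Σ_{d_1+⋯+d_l=d, d_i≥1}
 Σ_{m ≤ j_1 ≤ ⋯ ≤ j_l ≤ N−1−(N−k)d} ∏_{i=1}^{l} L^{d_i}_{j_i + (d_1+⋯+d_{i−1})(N−k)}`. -/
noncomputable def gammaCoeff (N k : ℤ) (L : ℕ → ℤ → ℚ) (d : ℕ) (m : ℤ) : ℚ :=
  ∑ l ∈ Finset.Icc 1 d,
    (-1 : ℚ) ^ (l - 1) *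
      ∑ dv ∈ (Fintype.piFinset fun _ : Fin l => Finset.Icc 1 d).filter
          (fun dv => ∑ i, dv i = d),
        ∑ jv ∈ (Fintype.piFinset fun _ : Fin l => Finset.Icc m (N - 1 - (N - k) * d)).filter
            (fun jv => ∀ a b : Fin l, a ≤ b → jv a ≤ jv b),
          ∏ i : Fin l, L (dv i) (jv i + (∑ n ∈ Finset.Iio i, (dv n : ℤ)) * (N - k))

namespace GammaAux

lemma sum_Iio_zero {β : Type*} [AddCommMonoid β] {l : ℕ} (g : Fin (l+1) → β) :
    ∑ n ∈ Finset.Iio (0 : Fin (l+1)), g n = 0 := by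
  have : Finset.Iio (0 : Fin (l+1)) = ∅ := by
    ext n; simp [Fin.not_lt_zero]
  simp [this]

lemma sum_Iio_succ {β : Type*} [AddCommMonoid β] {l : ℕ} (g : Fin (l+1) → β) (i : Fin l) :
    ∑ n ∈ Finset.Iio (Fin.succ i), g n = g 0 + ∑ n ∈ Finset.Iio i, g (Fin.succ n) := by
  have h : Finset.Iio (Fin.succ i)
      = insert 0 ((Finset.Iio i).map ⟨Fin.succ, Fin.succ_injective _⟩) := by
    ext n
    induction n using Fin.cases with
    | zero => simp [Fin.succ_pos]
    | succ n => simp [Fin.succ_lt_succ_iff, Fin.succ_ne_zero]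
  rw [h, Finset.sum_insert (by simp [Fin.succ_ne_zero]), Finset.sum_map]
  rfl

lemma sum_Icc_one_eq_sum_range (f : ℕ → ℚ) (n : ℕ) :
    ∑ l ∈ Finset.Icc 1 n, f l = ∑ i ∈ Finset.range n, f (i+1) :=
  (Finset.sum_nbij' (fun i => i+1) (fun l => l-1)
    (by intro a ha; simp only [Finset.mem_range] at ha; show a + 1 ∈ Finset.Icc 1 n;
        simp only [Finset.mem_Icc]; omega)
    (by intro a ha; simp only [Finset.mem_Icc] at ha; show a - 1 ∈ Finset.range n;
        simp only [Finset.mem_range]; omega)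
    (by intro a _; show a + 1 - 1 = a; omega)
    (by intro a ha; simp only [Finset.mem_Icc] at ha; show a - 1 + 1 = a; omega)
    (fun a _ => rfl)).symm

variable (N k : ℤ) (L : ℕ → ℤ → ℚ)

/-- The inner double sum of `gammaCoeff` for a fixed length `l`. -/
noncomputable def Aux (d : ℕ) (m : ℤ) (l : ℕ) : ℚ :=
  ∑ dv ∈ (Fintype.piFinset fun _ : Fin l => Finset.Icc 1 d).filter
      (fun dv => ∑ i, dv i = d),
    ∑ jv ∈ (Fintype.piFinset fun _ : Fin l => Finset.Icc m (N - 1 - (N - k) * d)).filter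
        (fun jv => ∀ a b : Fin l, a ≤ b → jv a ≤ jv b),
      ∏ i : Fin l, L (dv i) (jv i + (∑ n ∈ Finset.Iio i, (dv n : ℤ)) * (N - k))

lemma gammaCoeff_eq_sum_Aux (d : ℕ) (m : ℤ) :
    gammaCoeff N k L d m = ∑ l ∈ Finset.Icc 1 d, (-1 : ℚ) ^ (l - 1) * Aux N k L d m l := rfl

lemma Aux_eq_zero_of_lt {d l : ℕ} (h : d < l) (m : ℤ) : Aux N k L d m l = 0 := by
  unfold Aux
  apply Finset.sum_eq_zero
  intro dv hdv
  exfalso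
  simp only [Finset.mem_filter, Fintype.mem_piFinset, Finset.mem_Icc] at hdv
  obtain ⟨h1, h2⟩ := hdv
  have hle : l ≤ ∑ i, dv i := by
    calc l = ∑ _i : Fin l, 1 := by simp
    _ ≤ ∑ i, dv i := Finset.sum_le_sum fun i _ => (h1 i).1
  omega

lemma Aux_eq_zero_of_big {d l : ℕ} (hl : 1 ≤ l) {m : ℤ} (hm : N - 1 - (N - k) * d < m) :
    Aux N k L d m l = 0 := by
  unfold Aux
  apply Finset.sum_eq_zero
  intro dv _
  apply Finset.sum_eq_zero
  intro jv hjv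
  exfalso
  simp only [Finset.mem_filter, Fintype.mem_piFinset, Finset.mem_Icc] at hjv
  have := hjv.1 ⟨0, hl⟩
  omega

lemma gammaCoeff_eq_zero {d : ℕ} (hd : 1 ≤ d) {m : ℤ} (hm : N - 1 - (N - k) * d < m) :
    gammaCoeff N k L d m = 0 := by
  rw [gammaCoeff_eq_sum_Aux]
  apply Finset.sum_eq_zero
  intro l hl
  simp only [Finset.mem_Icc] at hl
  rw [Aux_eq_zero_of_big N k L hl.1 hm, mul_zero]

/-- The part of `Aux d m (l+1)` where the first `j`-coordinate equals `m`. -/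
noncomputable def Dt (d : ℕ) (m : ℤ) (l : ℕ) : ℚ :=
  ∑ dv ∈ (Fintype.piFinset fun _ : Fin (l+1) => Finset.Icc 1 d).filter
      (fun dv => ∑ i, dv i = d),
    ∑ jv ∈ (Fintype.piFinset fun _ : Fin (l+1) => Finset.Icc m (N - 1 - (N - k) * d)).filter
        (fun jv => (∀ a b : Fin (l+1), a ≤ b → jv a ≤ jv b) ∧ jv 0 = m),
      ∏ i : Fin (l+1), L (dv i) (jv i + (∑ n ∈ Finset.Iio i, (dv n : ℤ)) * (N - k))

lemma Aux_sub (d : ℕ) (m : ℤ) (l : ℕ) :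
    Aux N k L d m (l+1) - Aux N k L d (m+1) (l+1) = Dt N k L d m l := by
  unfold Aux Dt
  rw [← Finset.sum_sub_distrib]
  apply Finset.sum_congr rfl
  intro dv _
  set f : (Fin (l+1) → ℤ) → ℚ :=
    fun jv => ∏ i : Fin (l+1), L (dv i) (jv i + (∑ n ∈ Finset.Iio i, (dv n : ℤ)) * (N - k))
    with hf
  have hsplit := Finset.sum_filter_add_sum_filter_not
    ((Fintype.piFinset fun _ : Fin (l+1) => Finset.Icc m (N - 1 - (N - k) * d)).filter
        (fun jv => ∀ a b : Fin (l+1), a ≤ b → jv a ≤ jv b))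
    (fun jv => jv 0 = m) f
  have h1 : ((Fintype.piFinset fun _ : Fin (l+1) => Finset.Icc m (N - 1 - (N - k) * d)).filter
        (fun jv => ∀ a b : Fin (l+1), a ≤ b → jv a ≤ jv b)).filter (fun jv => jv 0 = m)
      = (Fintype.piFinset fun _ : Fin (l+1) => Finset.Icc m (N - 1 - (N - k) * d)).filter
        (fun jv => (∀ a b : Fin (l+1), a ≤ b → jv a ≤ jv b) ∧ jv 0 = m) := by
    rw [Finset.filter_filter]
  have h2 : ((Fintype.piFinset fun _ : Fin (l+1) => Finset.Icc m (N - 1 - (N - k) * d)).filter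
        (fun jv => ∀ a b : Fin (l+1), a ≤ b → jv a ≤ jv b)).filter (fun jv => ¬ jv 0 = m)
      = (Fintype.piFinset fun _ : Fin (l+1) => Finset.Icc (m+1) (N - 1 - (N - k) * d)).filter
        (fun jv => ∀ a b : Fin (l+1), a ≤ b → jv a ≤ jv b) := by
    ext jv
    simp only [Finset.mem_filter, Fintype.mem_piFinset, Finset.mem_Icc]
    constructor
    · rintro ⟨⟨hr, hord⟩, hne⟩
      refine ⟨fun i => ⟨?_, (hr i).2⟩, hord⟩
      have h0 := hord 0 i (Fin.zero_le i)
      have := (hr 0).1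
      omega
    · rintro ⟨hr, hord⟩
      exact ⟨⟨fun i => ⟨by linarith [(hr i).1], (hr i).2⟩, hord⟩,
        by have := (hr 0).1; omega⟩
  rw [h1, h2] at hsplit
  linarith [hsplit]

lemma Dt_zero {d : ℕ} (hd : 1 ≤ d) {m : ℤ} (hm : m ≤ N - 1 - (N - k) * d) :
    Dt N k L d m 0 = L d m := by
  unfold Dt
  have hdv : (Fintype.piFinset fun _ : Fin 1 => Finset.Icc 1 d).filter
      (fun dv => ∑ i, dv i = d) = {fun _ => d} := by
    ext dv
    simp only [Finset.mem_filter, Fintype.mem_piFinset, Finset.mem_Icc, Finset.mem_singleton,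
      Fin.sum_univ_one, funext_iff, Fin.forall_fin_one]
    omega
  have hjv : (Fintype.piFinset fun _ : Fin 1 => Finset.Icc m (N - 1 - (N - k) * d)).filter
      (fun jv => (∀ a b : Fin 1, a ≤ b → jv a ≤ jv b) ∧ jv 0 = m) = {fun _ => m} := by
    ext jv
    have hab : ∀ a b : Fin 1, a ≤ b → jv a ≤ jv b := by
      intro a b _
      have : a = b := Subsingleton.elim a b
      rw [this]
    simp only [Finset.mem_filter, Fintype.mem_piFinset, Finset.mem_Icc, Finset.mem_singleton,
      funext_iff, Fin.forall_fin_one, hab, true_and]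
    omega
  rw [hdv, hjv, Finset.sum_singleton, Finset.sum_singleton, Fin.prod_univ_one,
    sum_Iio_zero, zero_mul, add_zero]

/-- auxiliary inner sum used to split off the first factor. -/
noncomputable def Hf (d : ℕ) (m : ℤ) (l : ℕ) (d1 : ℕ) (w : Fin l → ℕ) : ℚ :=
  ∑ jv ∈ (Fintype.piFinset fun _ : Fin l => Finset.Icc m (N - 1 - (N - k) * d)).filter
      (fun jv => ∀ a b : Fin l, a ≤ b → jv a ≤ jv b),
    ∏ i : Fin l, L (w i) (jv i + ((d1 : ℤ) + ∑ n ∈ Finset.Iio i, (w n : ℤ)) * (N - k))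

lemma Hf_eq {d d1 : ℕ} (hd1 : d1 ≤ d) (m : ℤ) {l : ℕ} (w : Fin l → ℕ) :
    Hf N k L d m l d1 w
      = ∑ jv ∈ (Fintype.piFinset fun _ : Fin l =>
            Finset.Icc (m + (d1 : ℤ) * (N - k)) (N - 1 - (N - k) * ((d - d1 : ℕ) : ℤ))).filter
          (fun jv => ∀ a b : Fin l, a ≤ b → jv a ≤ jv b),
        ∏ i : Fin l, L (w i) (jv i + (∑ n ∈ Finset.Iio i, (w n : ℤ)) * (N - k)) := by
  have hcast : ((d - d1 : ℕ) : ℤ) = (d : ℤ) - d1 := Nat.cast_sub hd1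
  unfold Hf
  apply Finset.sum_nbij' (fun jv t => jv t + (d1 : ℤ) * (N - k))
    (fun jv t => jv t - (d1 : ℤ) * (N - k))
  · intro jv hjv
    simp only [Finset.mem_filter, Fintype.mem_piFinset, Finset.mem_Icc] at hjv ⊢
    refine ⟨fun i => ⟨by linarith [(hjv.1 i).1], ?_⟩, fun a b hab => by linarith [hjv.2 a b hab]⟩
    rw [hcast]
    have := (hjv.1 i).2
    nlinarith [this]
  · intro jv hjv
    simp only [Finset.mem_filter, Fintype.mem_piFinset, Finset.mem_Icc] at hjv ⊢
    refine ⟨fun i => ⟨by linarith [(hjv.1 i).1], ?_⟩, fun a b hab => by linarith [hjv.2 a b hab]⟩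
    have := (hjv.1 i).2
    rw [hcast] at this
    nlinarith [this]
  · intro jv _; funext t; ring
  · intro jv _; funext t; ring
  · intro jv _
    apply Finset.prod_congr rfl
    intro i _
    congr 1
    ring

lemma inner_split {d : ℕ} (m : ℤ) {l : ℕ} (hl : 1 ≤ l) (dv : Fin (l+1) → ℕ) :
    ∑ jv ∈ (Fintype.piFinset fun _ : Fin (l+1) =>
          Finset.Icc m (N - 1 - (N - k) * d)).filter
        (fun jv => (∀ a b : Fin (l+1), a ≤ b → jv a ≤ jv b) ∧ jv 0 = m),
      ∏ i : Fin (l+1), L (dv i) (jv i + (∑ n ∈ Finset.Iio i, (dv n : ℤ)) * (N - k))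
    = L (dv 0) m * Hf N k L d m l (dv 0) (Fin.tail dv) := by
  unfold Hf
  rw [Finset.mul_sum]
  apply Finset.sum_nbij' (fun jv => Fin.tail jv) (fun jv' => Fin.cons m jv')
  · intro jv hjv
    simp only [Finset.mem_filter, Fintype.mem_piFinset, Finset.mem_Icc] at hjv ⊢
    exact ⟨fun i => hjv.1 i.succ,
      fun a b hab => hjv.2.1 a.succ b.succ (Fin.succ_le_succ_iff.mpr hab)⟩
  · intro jv' hjv'
    simp only [Finset.mem_filter, Fintype.mem_piFinset, Finset.mem_Icc] at hjv' ⊢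
    have hmM : m ≤ N - 1 - (N - k) * d := by
      have := hjv'.1 ⟨0, hl⟩
      omega
    refine ⟨?_, ?_, Fin.cons_zero _ _⟩
    · intro i
      induction i using Fin.cases with
      | zero => simp only [Fin.cons_zero]; exact ⟨le_rfl, hmM⟩
      | succ i => simp only [Fin.cons_succ]; exact hjv'.1 i
    · intro a b hab
      induction a using Fin.cases with
      | zero =>
        induction b using Fin.cases with
        | zero => exact le_rfl
        | succ j => simpa using (hjv'.1 j).1
      | succ i =>
        induction b using Fin.cases with
        | zero => exact absurd (Fin.le_zero_iff.mp hab) (Fin.succ_ne_zero i)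
        | succ j =>
          simp only [Fin.cons_succ]
          exact hjv'.2 i j (by rwa [Fin.succ_le_succ_iff] at hab)
  · intro jv hjv
    simp only [Finset.mem_filter] at hjv
    rw [← hjv.2.2]
    exact Fin.cons_self_tail jv
  · intro jv' _
    exact Fin.tail_cons _ _
  · intro jv hjv
    simp only [Finset.mem_filter] at hjv
    rw [Fin.prod_univ_succ]
    congr 1
    · rw [sum_Iio_zero, zero_mul, add_zero, hjv.2.2]
    · apply Finset.prod_congr rfl
      intro i _
      rw [sum_Iio_succ]
      rfl

lemma Dt_succ {d : ℕ} (hd : 1 ≤ d) (m : ℤ) {l : ℕ} (hl : 1 ≤ l) :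
    Dt N k L d m l = ∑ d1 ∈ Finset.Ico 1 d,
      L d1 m * Aux N k L (d - d1) (m + (d1 : ℤ) * (N - k)) l := by
  unfold Dt
  rw [Finset.sum_congr rfl (fun dv _ => inner_split N k L m hl dv)]
  have hRHS : ∑ d1 ∈ Finset.Ico 1 d,
      L d1 m * Aux N k L (d - d1) (m + (d1 : ℤ) * (N - k)) l
      = ∑ p ∈ (Finset.Ico 1 d).sigma (fun d1 =>
          (Fintype.piFinset fun _ : Fin l => Finset.Icc 1 (d - d1)).filter
            (fun w => ∑ i, w i = d - d1)),
        L p.1 m * Hf N k L d m l p.1 p.2 := by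
    rw [Finset.sum_sigma]
    apply Finset.sum_congr rfl
    intro d1 hd1
    simp only [Finset.mem_Ico] at hd1
    unfold Aux
    rw [Finset.mul_sum]
    apply Finset.sum_congr rfl
    intro w _
    rw [Hf_eq N k L (le_of_lt hd1.2) m w]
  rw [hRHS]
  apply Finset.sum_nbij' (fun dv => (⟨dv 0, Fin.tail dv⟩ :
      (_ : ℕ) × (Fin l → ℕ))) (fun p => Fin.cons p.1 p.2)
  · intro dv hdv
    simp only [Finset.mem_filter, Fintype.mem_piFinset, Finset.mem_Icc] at hdv
    have hsum : dv 0 + ∑ i : Fin l, dv (Fin.succ i) = d := by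
      rw [← Fin.sum_univ_succ]; exact hdv.2
    have htail : (l : ℕ) ≤ ∑ i : Fin l, dv (Fin.succ i) := by
      calc (l : ℕ) = ∑ _i : Fin l, 1 := by simp
      _ ≤ ∑ i : Fin l, dv (Fin.succ i) := Finset.sum_le_sum fun i _ => (hdv.1 i.succ).1
    have hle : ∀ i : Fin l, dv (Fin.succ i) ≤ ∑ j : Fin l, dv (Fin.succ j) :=
      fun i => Finset.single_le_sum (f := fun j : Fin l => dv (Fin.succ j))
        (fun j _ => Nat.zero_le _) (Finset.mem_univ i)
    simp only [Finset.mem_sigma, Finset.mem_Ico, Finset.mem_filter, Fintype.mem_piFinset,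
      Finset.mem_Icc]
    refine ⟨⟨(hdv.1 0).1, by omega⟩, fun i => ⟨(hdv.1 i.succ).1, ?_⟩, by
      show ∑ i : Fin l, dv (Fin.succ i) = d - dv 0
      omega⟩
    show dv (Fin.succ i) ≤ d - dv 0
    have := hle i
    omega
  · intro p hp
    simp only [Finset.mem_sigma, Finset.mem_Ico, Finset.mem_filter, Fintype.mem_piFinset,
      Finset.mem_Icc] at hp
    simp only [Finset.mem_filter, Fintype.mem_piFinset, Finset.mem_Icc]
    obtain ⟨⟨h1, h2⟩, h3, h4⟩ := hp
    constructor
    · intro i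
      induction i using Fin.cases with
      | zero => simp only [Fin.cons_zero]; exact ⟨h1, le_of_lt h2⟩
      | succ i =>
        have := h3 i
        simp only [Fin.cons_succ]
        omega
    · rw [Fin.sum_univ_succ]
      simp only [Fin.cons_zero, Fin.cons_succ]
      rw [h4]
      omega
  · intro dv _
    exact Fin.cons_self_tail dv
  · intro p _
    simp [Fin.tail_cons]
  · intro dv _
    rfl

end GammaAux

theorem gammaCoeff_recursion (N k : ℤ) (hNk : 1 ≤ N - k) (d : ℕ) (hd : 1 ≤ d)
    (L : ℕ → ℤ → ℚ)
    (hL : ∀ d' : ℕ, 1 ≤ d' → d' ≤ d → ∀ m : ℤ,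
      L d' m ≠ 0 → 0 ≤ m ∧ m ≤ N - 1 - (N - k) * d') :
    ∀ d' : ℕ, 1 ≤ d' → d' ≤ d → ∀ m : ℤ,
      (gammaCoeff N k L d' m - gammaCoeff N k L d' (m + 1)
          = L d' m - ∑ d'' ∈ Finset.Ico 1 d',
              L (d' - d'') m * gammaCoeff N k L d'' (m + (N - k) * ((d' - d'' : ℕ) : ℤ)))
      ∧ (N - 1 - (N - k) * d' < m → gammaCoeff N k L d' m = 0) := by
  intro d' hd'1 hd'd m
  refine ⟨?_, fun hm => GammaAux.gammaCoeff_eq_zero N k L hd'1 hm⟩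
  by_cases hm : m ≤ N - 1 - (N - k) * d'
  · obtain ⟨e, rfl⟩ : ∃ e, d' = e + 1 := ⟨d' - 1, by omega⟩
    rw [GammaAux.gammaCoeff_eq_sum_Aux, GammaAux.gammaCoeff_eq_sum_Aux,
      ← Finset.sum_sub_distrib]
    calc
      ∑ l ∈ Finset.Icc 1 (e+1),
          ((-1:ℚ) ^ (l-1) * GammaAux.Aux N k L (e+1) m l
            - (-1:ℚ) ^ (l-1) * GammaAux.Aux N k L (e+1) (m+1) l)
          = ∑ i ∈ Finset.range (e+1), (-1:ℚ) ^ i * GammaAux.Dt N k L (e+1) m i := by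
            rw [GammaAux.sum_Icc_one_eq_sum_range
              (fun l => (-1:ℚ) ^ (l-1) * GammaAux.Aux N k L (e+1) m l
                - (-1:ℚ) ^ (l-1) * GammaAux.Aux N k L (e+1) (m+1) l) (e+1)]
            apply Finset.sum_congr rfl
            intro i _
            rw [show i + 1 - 1 = i from rfl, ← mul_sub, GammaAux.Aux_sub]
      _ = (∑ i ∈ Finset.range e, (-1:ℚ) ^ (i+1) * GammaAux.Dt N k L (e+1) m (i+1))
            + (-1:ℚ) ^ 0 * GammaAux.Dt N k L (e+1) m 0 :=
            Finset.sum_range_succ' (fun i => (-1:ℚ) ^ i * GammaAux.Dt N k L (e+1) m i) e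
      _ = L (e+1) m - ∑ d1 ∈ Finset.Ico 1 (e+1),
            L d1 m * gammaCoeff N k L (e+1-d1) (m + (d1 : ℤ) * (N - k)) := by
            rw [GammaAux.Dt_zero N k L (by omega) hm, pow_zero, one_mul]
            have hstep : ∀ i ∈ Finset.range e,
                (-1:ℚ) ^ (i+1) * GammaAux.Dt N k L (e+1) m (i+1)
                = ∑ d1 ∈ Finset.Ico 1 (e+1),
                    -(L d1 m * ((-1:ℚ) ^ i
                      * GammaAux.Aux N k L (e+1-d1) (m + (d1:ℤ) * (N-k)) (i+1))) := by
              intro i _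
              rw [GammaAux.Dt_succ N k L (by omega) m (by omega), Finset.mul_sum]
              apply Finset.sum_congr rfl
              intro d1 _
              ring
            rw [Finset.sum_congr rfl hstep, Finset.sum_comm]
            have hinner : ∀ d1 ∈ Finset.Ico 1 (e+1),
                (∑ i ∈ Finset.range e,
                  -(L d1 m * ((-1:ℚ) ^ i
                    * GammaAux.Aux N k L (e+1-d1) (m + (d1:ℤ) * (N-k)) (i+1))))
                = -(L d1 m * gammaCoeff N k L (e+1-d1) (m + (d1:ℤ) * (N-k))) := by
              intro d1 hd1
              simp only [Finset.mem_Ico] at hd1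
              have hgam : gammaCoeff N k L (e+1-d1) (m + (d1:ℤ) * (N-k))
                  = ∑ i ∈ Finset.range e,
                      (-1:ℚ) ^ i * GammaAux.Aux N k L (e+1-d1) (m + (d1:ℤ) * (N-k)) (i+1) := by
                rw [GammaAux.gammaCoeff_eq_sum_Aux, GammaAux.sum_Icc_one_eq_sum_range
                  (fun l => (-1:ℚ) ^ (l-1)
                    * GammaAux.Aux N k L (e+1-d1) (m + (d1:ℤ) * (N-k)) l) (e+1-d1)]
                apply Finset.sum_subset (Finset.range_subset_range.mpr (by omega : e+1-d1 ≤ e))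
                intro i _ hnot
                simp only [Finset.mem_range, not_lt] at hnot
                rw [GammaAux.Aux_eq_zero_of_lt N k L (by omega), mul_zero]
              rw [hgam, Finset.mul_sum, ← Finset.sum_neg_distrib]
            rw [Finset.sum_congr rfl hinner, Finset.sum_neg_distrib]
            ring
      _ = L (e+1) m - ∑ d'' ∈ Finset.Ico 1 (e+1),
            L (e+1-d'') m * gammaCoeff N k L d'' (m + (N - k) * ((e+1-d'' : ℕ) : ℤ)) := by
            congr 1
            apply Finset.sum_nbij' (fun d1 => e+1-d1) (fun d'' => e+1-d'')
            · intro a ha; simp only [Finset.mem_Ico] at ha ⊢; omega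
            · intro a ha; simp only [Finset.mem_Ico] at ha ⊢; omega
            · intro a ha; simp only [Finset.mem_Ico] at ha; omega
            · intro a ha; simp only [Finset.mem_Ico] at ha; omega
            · intro d1 hd1
              simp only [Finset.mem_Ico] at hd1
              have h1 : e+1-(e+1-d1) = d1 := by omega
              rw [h1, mul_comm (d1:ℤ) (N-k)]
  · push_neg at hm
    have hz1 := GammaAux.gammaCoeff_eq_zero N k L hd'1 hm
    have hz2 := GammaAux.gammaCoeff_eq_zero N k L hd'1
      (show N - 1 - (N - k) * d' < m + 1 by linarith)
    have hLz : L d' m = 0 := by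
      by_contra h
      exact absurd ((hL d' hd'1 hd'd m h).2) (not_le.mpr hm)
    have hsum0 : ∑ d'' ∈ Finset.Ico 1 d',
        L (d' - d'') m * gammaCoeff N k L d'' (m + (N - k) * ((d' - d'' : ℕ) : ℤ)) = 0 := by
      apply Finset.sum_eq_zero
      intro d'' hd''
      simp only [Finset.mem_Ico] at hd''
      have hcast : ((d' - d'' : ℕ) : ℤ) = (d' : ℤ) - d'' := Nat.cast_sub (le_of_lt hd''.2)
      have hbig : N - 1 - (N - k) * d'' < m + (N - k) * ((d' - d'' : ℕ) : ℤ) := by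
        rw [hcast]; linarith [hm]
      rw [GammaAux.gammaCoeff_eq_zero N k L hd''.1 hbig, mul_zero]
    rw [hz1, hz2, hLz, hsum0]
end

section
/- Let N, k be integers with k ≥ 1 and N − k ≥ 2. Let A be a commutative ℚ-algebra, let q, x ∈ A, and let O_0, O_1, …, O_{N−2} ∈ A with O_0 = 1; extend the indexing by setting O_j := 0 for j < 0 and for j ≥ N−1. Let L^{d}_m ∈ ℚ (d ≥ 1, m ∈ ℤ) satisfy L^{d}_m = 0 unless 0 ≤ m ≤ N−1−(N−k)d (so that L^d = 0 for all d > (N−1)/(N−k) and all sums below are finite). Assume that for every 0 ≤ m ≤ N−2: x · O_{N−2−m} = O_{N−1−m} + Σ_{d≥1} q^d L^{d}_m O_{N−1−m−(N−k)d}. Then for every 0 ≤ m ≤ N−2: O_{N−1−m} = x^{N−1−m} − Σ_{d≥1} q^d γ^{N,k,d}_m x^{N−1−m−(N−k)d} (all exponents occurring with nonzero γ are nonnegative), and in particular, taking m = 0, the main relation x^{N−1} = Σ_{d≥1} γ^{N,k,d}_0 q^d x^{N−1−(N−k)d} holds in A. -/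
open Finset Fintype

lemma sum_piFinset_cons {α M : Type*} [DecidableEq α] [AddCommMonoid M] (s : Finset α) (n : ℕ)
    (P : (Fin (n+1) → α) → Prop) [DecidablePred P] (f : (Fin (n+1) → α) → M) :
    ∑ g ∈ (piFinset fun _ : Fin (n+1) => s).filter P, f g
      = ∑ a ∈ s, ∑ g ∈ (piFinset fun _ : Fin n => s).filter (fun g => P (Fin.cons a g)),
          f (Fin.cons a g) := by
  rw [← Finset.sum_sigma s (fun a => (piFinset fun _ : Fin n => s).filter (fun g => P (Fin.cons a g))) (fun p => f (Fin.cons p.1 p.2))]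
  refine Finset.sum_nbij' (fun g => ⟨g 0, Fin.tail g⟩) (fun p => Fin.cons p.1 p.2) ?_ ?_ ?_ ?_ ?_
  · intro g hg
    simp only [mem_filter, Fintype.mem_piFinset] at hg
    simp only [Finset.mem_sigma, mem_filter, Fintype.mem_piFinset]
    refine ⟨hg.1 0, ⟨fun i => hg.1 i.succ, by rw [Fin.cons_self_tail]; exact hg.2⟩⟩
  · intro p hp
    simp only [Finset.mem_sigma, mem_filter, Fintype.mem_piFinset] at hp
    simp only [mem_filter, Fintype.mem_piFinset]
    exact ⟨fun i => Fin.cases hp.1 (fun j => hp.2.1 j) i, hp.2.2⟩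
  · intro g hg; exact Fin.cons_self_tail g
  · intro p hp
    ext : 1
    · simp
    · simp [Fin.tail_cons]
  · intro g hg; rw [Fin.cons_self_tail]

lemma gammaCoeff_eq_zero (N k : ℤ) (L : ℕ → ℤ → ℚ) (d : ℕ) (m : ℤ)
    (h : N - 1 - (N - k) * d < m) : gammaCoeff N k L d m = 0 := by
  unfold gammaCoeff
  refine Finset.sum_eq_zero fun l hl => ?_
  rw [Finset.mem_Icc] at hl
  rw [mul_eq_zero]; right
  refine Finset.sum_eq_zero fun dv _ => ?_
  refine Finset.sum_eq_zero fun jv hjv => ?_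
  exfalso
  rw [Finset.mem_filter, Fintype.mem_piFinset] at hjv
  have := hjv.1 ⟨0, hl.1⟩
  rw [Finset.mem_Icc] at this
  omega
/-- Inner double sum of `gammaCoeff` at a fixed length `l`. -/
noncomputable def chainSum (N k : ℤ) (L : ℕ → ℤ → ℚ) (d : ℕ) (m : ℤ) (l : ℕ) : ℚ :=
  ∑ dv ∈ (Fintype.piFinset fun _ : Fin l => Finset.Icc 1 d).filter
      (fun dv => ∑ i, dv i = d),
    ∑ jv ∈ (Fintype.piFinset fun _ : Fin l => Finset.Icc m (N - 1 - (N - k) * d)).filter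
        (fun jv => ∀ a b : Fin l, a ≤ b → jv a ≤ jv b),
      ∏ i : Fin l, L (dv i) (jv i + (∑ n ∈ Finset.Iio i, (dv n : ℤ)) * (N - k))

lemma gammaCoeff_eq_sum_chainSum (N k : ℤ) (L : ℕ → ℤ → ℚ) (d : ℕ) (m : ℤ) :
    gammaCoeff N k L d m
      = ∑ l ∈ Finset.Icc 1 d, (-1 : ℚ) ^ (l - 1) * chainSum N k L d m l := rfl

/-- `chainSum` vanishes when the length exceeds `d`. -/
lemma chainSum_eq_zero (N k : ℤ) (L : ℕ → ℤ → ℚ) (d : ℕ) (m : ℤ) (l : ℕ) (h : d < l) :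
    chainSum N k L d m l = 0 := by
  unfold chainSum
  refine Finset.sum_eq_zero fun dv hdv => ?_
  exfalso
  rw [Finset.mem_filter, Fintype.mem_piFinset] at hdv
  have h1 : ∀ i, 1 ≤ dv i := fun i => (Finset.mem_Icc.mp (hdv.1 i)).1
  have hle : ∑ _i : Fin l, (1:ℕ) ≤ ∑ i, dv i := Finset.sum_le_sum fun i _ => h1 i
  simp only [Finset.sum_const, Finset.card_univ, Fintype.card_fin, smul_eq_mul, mul_one] at hle
  omega

lemma chainSum_zero_len (N k : ℤ) (L : ℕ → ℤ → ℚ) (d : ℕ) (m : ℤ) :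
    chainSum N k L d m 0 = if d = 0 then 1 else 0 := by
  unfold chainSum
  rcases eq_or_ne d 0 with rfl | hd
  · simp
  · simp [hd, Finset.filter_eq_empty_iff, Ne.symm hd]
lemma sum_Iio_succ_fin {M : Type*} [AddCommMonoid M] {n : ℕ} (g : Fin (n+1) → M) (i : Fin n) :
    ∑ j ∈ Finset.Iio i.succ, g j = g 0 + ∑ j ∈ Finset.Iio i, g j.succ := by
  have : Finset.Iio i.succ = insert 0 ((Finset.Iio i).map ⟨Fin.succ, Fin.succ_injective n⟩) := by
    ext x
    simp only [Finset.mem_Iio, Finset.mem_insert, Finset.mem_map, Function.Embedding.coeFn_mk]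
    constructor
    · intro hx
      rcases Fin.eq_zero_or_eq_succ x with rfl | ⟨y, rfl⟩
      · exact Or.inl rfl
      · exact Or.inr ⟨y, by rwa [Fin.succ_lt_succ_iff] at hx, rfl⟩
    · rintro (rfl | ⟨y, hy, rfl⟩)
      · exact Fin.succ_pos i
      · rwa [Fin.succ_lt_succ_iff]
  rw [this, Finset.sum_insert (by simp [Fin.succ_ne_zero]), Finset.sum_map]
  rfl

lemma comp_filter_eq (d d1 : ℕ) (l : ℕ) (h1 : 1 ≤ d1) (hd : d1 ≤ d) :
    (Fintype.piFinset fun _ : Fin l => Finset.Icc 1 d).filter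
        (fun dv => d1 + ∑ i, dv i = d)
      = (Fintype.piFinset fun _ : Fin l => Finset.Icc 1 (d - d1)).filter
        (fun dv => ∑ i, dv i = d - d1) := by
  ext x
  simp only [Finset.mem_filter, Fintype.mem_piFinset, Finset.mem_Icc]
  constructor
  · rintro ⟨hx, hs⟩
    have hxle : ∀ i, x i ≤ d - d1 := by
      intro i
      have := Finset.single_le_sum (f := x) (fun i _ => Nat.zero_le _)
        (Finset.mem_univ i)
      omega
    exact ⟨fun i => ⟨(hx i).1, hxle i⟩, by omega⟩
  · rintro ⟨hx, hs⟩
    exact ⟨fun i => ⟨(hx i).1, by have := (hx i).2; omega⟩, by omega⟩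

lemma chain_shift (l : ℕ) (m T c : ℤ) (F : (Fin l → ℤ) → ℚ) :
    ∑ jv ∈ (Fintype.piFinset fun _ : Fin l => Finset.Icc m T).filter
        (fun jv => ∀ a b : Fin l, a ≤ b → jv a ≤ jv b),
      F (fun i => jv i + c)
    = ∑ kv ∈ (Fintype.piFinset fun _ : Fin l => Finset.Icc (m + c) (T + c)).filter
        (fun kv => ∀ a b : Fin l, a ≤ b → kv a ≤ kv b),
      F kv := by
  refine Finset.sum_nbij' (fun jv => fun i => jv i + c) (fun kv => fun i => kv i - c)
    ?_ ?_ ?_ ?_ ?_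
  · intro jv hjv
    rw [Finset.mem_filter, Fintype.mem_piFinset] at hjv
    rw [Finset.mem_filter, Fintype.mem_piFinset]
    refine ⟨fun i => ?_, fun a b hab => ?_⟩
    · have := hjv.1 i; rw [Finset.mem_Icc] at this
      show jv i + c ∈ Finset.Icc (m + c) (T + c)
      rw [Finset.mem_Icc]; omega
    · have := hjv.2 a b hab
      show jv a + c ≤ jv b + c
      omega
  · intro kv hkv
    rw [Finset.mem_filter, Fintype.mem_piFinset] at hkv
    rw [Finset.mem_filter, Fintype.mem_piFinset]
    refine ⟨fun i => ?_, fun a b hab => ?_⟩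
    · have := hkv.1 i; rw [Finset.mem_Icc] at this
      show kv i - c ∈ Finset.Icc m T
      rw [Finset.mem_Icc]; omega
    · have := hkv.2 a b hab
      show kv a - c ≤ kv b - c
      omega
  · intro jv _; funext i; ring
  · intro kv _; funext i; ring
  · intro jv _; rfl
/-- Variant of `chainSum` over chains of length `l'+1` whose first entry equals `m`. -/
noncomputable def chainSumHead (N k : ℤ) (L : ℕ → ℤ → ℚ) (d : ℕ) (m : ℤ) (l' : ℕ) : ℚ :=
  ∑ dv ∈ (Fintype.piFinset fun _ : Fin (l'+1) => Finset.Icc 1 d).filter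
      (fun dv => ∑ i, dv i = d),
    ∑ jv ∈ (Fintype.piFinset fun _ : Fin (l'+1) => Finset.Icc m (N - 1 - (N - k) * d)).filter
        (fun jv => (∀ a b : Fin (l'+1), a ≤ b → jv a ≤ jv b) ∧ jv 0 = m),
      ∏ i : Fin (l'+1), L (dv i) (jv i + (∑ n ∈ Finset.Iio i, (dv n : ℤ)) * (N - k))

lemma chainSum_succ_split (N k : ℤ) (L : ℕ → ℤ → ℚ) (d : ℕ) (m : ℤ) (l' : ℕ) :
    chainSum N k L d m (l'+1)
      = chainSumHead N k L d m l' + chainSum N k L d (m+1) (l'+1) := by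
  unfold chainSum chainSumHead
  rw [← Finset.sum_add_distrib]
  refine Finset.sum_congr rfl fun dv _ => ?_
  rw [← Finset.sum_filter_add_sum_filter_not
    ((Fintype.piFinset fun _ : Fin (l'+1) => Finset.Icc m (N - 1 - (N - k) * d)).filter
        (fun jv => ∀ a b : Fin (l'+1), a ≤ b → jv a ≤ jv b))
    (fun jv => jv 0 = m)]
  congr 1
  · congr 1
    rw [Finset.filter_filter]
  · apply Finset.sum_congr _ fun jv _ => rfl
    rw [Finset.filter_filter]
    ext jv
    simp only [Finset.mem_filter, Fintype.mem_piFinset, Finset.mem_Icc]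
    constructor
    · rintro ⟨hmem, hchain, hne⟩
      have h0 : m ≤ jv 0 := (hmem 0).1
      have h0' : m + 1 ≤ jv 0 := by
        rcases lt_or_eq_of_le h0 with h | h
        · omega
        · exact absurd h.symm hne
      exact ⟨fun i => ⟨le_trans h0' (hchain 0 i (Fin.zero_le i)), (hmem i).2⟩, hchain⟩
    · rintro ⟨hmem, hchain⟩
      exact ⟨fun i => ⟨by have := (hmem i).1; omega, (hmem i).2⟩, hchain,
        fun h => by have := (hmem 0).1; omega⟩
set_option maxHeartbeats 1000000 in
lemma chainSumHead_eq (N k : ℤ) (L : ℕ → ℤ → ℚ) (d : ℕ) (m : ℤ) (l' : ℕ)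
    (hm : m ≤ N - 1 - (N - k) * d) :
    chainSumHead N k L d m l'
      = ∑ d1 ∈ Finset.Icc 1 d, L d1 m * chainSum N k L (d - d1) (m + (N - k) * d1) l' := by
  unfold chainSumHead
  rw [sum_piFinset_cons]
  refine Finset.sum_congr rfl fun d1 hd1 => ?_
  rw [Finset.mem_Icc] at hd1
  -- rewrite the dv'-index set
  have hset : ((Fintype.piFinset fun _ : Fin l' => Finset.Icc 1 d).filter
        (fun g => (fun dv => ∑ i, dv i = d) (Fin.cons d1 g)))
      = ((Fintype.piFinset fun _ : Fin l' => Finset.Icc 1 (d - d1)).filter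
        (fun dv => ∑ i, dv i = d - d1)) := by
    rw [← comp_filter_eq d d1 l' hd1.1 hd1.2]
    apply Finset.filter_congr
    intro g _
    simp [Fin.sum_univ_succ]
  rw [hset]
  unfold chainSum
  rw [Finset.mul_sum]
  refine Finset.sum_congr rfl fun dv' hdv' => ?_
  -- now handle the jv-sum
  rw [sum_piFinset_cons]
  rw [Finset.sum_eq_single_of_mem m (Finset.mem_Icc.mpr ⟨le_rfl, hm⟩)
    (fun j1 _ hne => Finset.sum_eq_zero fun g hg =>
      (hne (by simpa using (Finset.mem_filter.mp hg).2.2)).elim)]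
  -- rewrite the jv'-index set: the head condition is now trivial, chains shift
  have hset2 : ((Fintype.piFinset fun _ : Fin l' => Finset.Icc m (N - 1 - (N - k) * d)).filter
        (fun g => (fun jv => (∀ a b : Fin (l'+1), a ≤ b → jv a ≤ jv b) ∧ jv 0 = m)
          (Fin.cons m g : Fin (l'+1) → ℤ)))
      = ((Fintype.piFinset fun _ : Fin l' => Finset.Icc m (N - 1 - (N - k) * d)).filter
        (fun g => ∀ a b : Fin l', a ≤ b → g a ≤ g b)) := by
    apply Finset.filter_congr
    intro g hg
    rw [Fintype.mem_piFinset] at hg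
    simp only [Fin.cons_zero, and_true]
    constructor
    · intro h a b hab
      have := h a.succ b.succ (by rwa [Fin.succ_le_succ_iff])
      simpa [Fin.cons_succ] using this
    · intro h a b
      refine Fin.cases ?_ (fun i => ?_) a
      · refine Fin.cases ?_ (fun j => ?_) b <;> intro hab'
        · simp
        · simp only [Fin.cons_zero, Fin.cons_succ]
          exact (Finset.mem_Icc.mp (hg j)).1
      · refine Fin.cases ?_ (fun j => ?_) b <;> intro hab'
        · exact absurd hab' (by simp [Fin.le_def, Fin.lt_def])
        · simp only [Fin.cons_succ]
          exact h i j (by rwa [Fin.succ_le_succ_iff] at hab')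
  rw [hset2]
  have hT : (N - 1 - (N - k) * (d:ℤ)) + (N - k) * (d1:ℤ)
      = N - 1 - (N - k) * ((d - d1 : ℕ) : ℤ) := by
    have : ((d - d1 : ℕ) : ℤ) = (d : ℤ) - (d1 : ℤ) := by
      have := hd1.2; push_cast [this]; ring
    rw [this]; ring
  calc
    ∑ g ∈ (Fintype.piFinset fun _ : Fin l' => Finset.Icc m (N - 1 - (N - k) * d)).filter
        (fun g => ∀ a b : Fin l', a ≤ b → g a ≤ g b),
      ∏ i : Fin (l'+1), L ((Fin.cons d1 dv' : Fin (l'+1) → ℕ) i)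
        ((Fin.cons m g : Fin (l'+1) → ℤ) i + (∑ n ∈ Finset.Iio i,
          ((Fin.cons d1 dv' : Fin (l'+1) → ℕ) n : ℤ)) * (N - k))
      = ∑ g ∈ (Fintype.piFinset fun _ : Fin l' => Finset.Icc m (N - 1 - (N - k) * d)).filter
          (fun g => ∀ a b : Fin l', a ≤ b → g a ≤ g b),
        L d1 m * (fun kv : Fin l' → ℤ => ∏ i : Fin l',
          L (dv' i) (kv i + (∑ n ∈ Finset.Iio i, (dv' n : ℤ)) * (N - k)))
          (fun i => g i + (N - k) * (d1:ℤ)) := by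
      refine Finset.sum_congr rfl fun g hg => ?_
      rw [Fin.prod_univ_succ]
      have h0 : ∑ n ∈ Finset.Iio (0 : Fin (l'+1)),
          ((Fin.cons d1 dv' : Fin (l'+1) → ℕ) n : ℤ) = 0 :=
        Finset.sum_eq_zero fun n hn =>
          absurd (Finset.mem_Iio.mp hn) (Fin.not_lt_zero n)
      rw [h0]
      simp only [Fin.cons_zero, zero_mul, add_zero]
      congr 1
      show _ = ∏ i : Fin l',
        L (dv' i) ((g i + (N - k) * (d1:ℤ)) + (∑ n ∈ Finset.Iio i, (dv' n : ℤ)) * (N - k))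
      refine Finset.prod_congr rfl fun i _ => ?_
      rw [sum_Iio_succ_fin (fun n => ((Fin.cons d1 dv' : Fin (l'+1) → ℕ) n : ℤ)) i]
      simp only [Fin.cons_succ, Fin.cons_zero]
      congr 1
      ring
    _ = L d1 m * ∑ g ∈ (Fintype.piFinset fun _ : Fin l' =>
          Finset.Icc m (N - 1 - (N - k) * d)).filter
          (fun g => ∀ a b : Fin l', a ≤ b → g a ≤ g b),
        (fun kv : Fin l' → ℤ => ∏ i : Fin l',
          L (dv' i) (kv i + (∑ n ∈ Finset.Iio i, (dv' n : ℤ)) * (N - k)))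
          (fun i => g i + (N - k) * (d1:ℤ)) := by
      rw [Finset.mul_sum]
    _ = L d1 m * ∑ kv ∈ (Fintype.piFinset fun _ : Fin l' =>
          Finset.Icc (m + (N - k) * (d1:ℤ))
            ((N - 1 - (N - k) * (d:ℤ)) + (N - k) * (d1:ℤ))).filter
          (fun kv => ∀ a b : Fin l', a ≤ b → kv a ≤ kv b),
        ∏ i : Fin l', L (dv' i) (kv i + (∑ n ∈ Finset.Iio i, (dv' n : ℤ)) * (N - k)) := by
      exact congrArg (fun z => L d1 m * z)
        (chain_shift l' m (N - 1 - (N - k) * (d:ℤ)) ((N - k) * (d1:ℤ))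
          (fun kv => ∏ i : Fin l',
            L (dv' i) (kv i + (∑ n ∈ Finset.Iio i, (dv' n : ℤ)) * (N - k))))
    _ = L d1 m * ∑ kv ∈ (Fintype.piFinset fun _ : Fin l' =>
          Finset.Icc (m + (N - k) * (d1:ℤ))
            (N - 1 - (N - k) * ((d - d1 : ℕ) : ℤ))).filter
          (fun kv => ∀ a b : Fin l', a ≤ b → kv a ≤ kv b),
        ∏ i : Fin l', L (dv' i) (kv i + (∑ n ∈ Finset.Iio i, (dv' n : ℤ)) * (N - k)) := by
      rw [hT]

lemma gammaCoeff_zero_d (N k : ℤ) (L : ℕ → ℤ → ℚ) (m : ℤ) :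
    gammaCoeff N k L 0 m = 0 := by
  unfold gammaCoeff; simp

lemma gammaCoeff_rec (N k : ℤ) (L : ℕ → ℤ → ℚ)
    (hL : ∀ d : ℕ, 1 ≤ d → ∀ m : ℤ, L d m ≠ 0 → 0 ≤ m ∧ m ≤ N - 1 - (N - k) * d)
    (d : ℕ) (hd : 1 ≤ d) (m : ℤ) :
    gammaCoeff N k L d m = gammaCoeff N k L d (m+1) + L d m
      - ∑ d1 ∈ Finset.Icc 1 (d-1),
          L d1 m * gammaCoeff N k L (d - d1) (m + (N - k) * d1) := by
  rcases le_or_gt m (N - 1 - (N - k) * d) with hm | hm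
  · -- main case
    have hsplit : gammaCoeff N k L d m
        = gammaCoeff N k L d (m+1)
          + ∑ l ∈ Finset.Icc 1 d, (-1 : ℚ) ^ (l - 1) * chainSumHead N k L d m (l-1) := by
      rw [gammaCoeff_eq_sum_chainSum, gammaCoeff_eq_sum_chainSum, ← Finset.sum_add_distrib]
      refine Finset.sum_congr rfl fun l hl => ?_
      rw [Finset.mem_Icc] at hl
      obtain ⟨l', rfl⟩ : ∃ l', l = l' + 1 := ⟨l - 1, by omega⟩
      rw [chainSum_succ_split]
      simp only [Nat.add_sub_cancel]
      ring
    rw [hsplit]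
    have hre : ∑ l ∈ Finset.Icc 1 d, (-1 : ℚ) ^ (l - 1) * chainSumHead N k L d m (l-1)
        = ∑ l' ∈ Finset.Icc 0 (d-1), (-1 : ℚ) ^ l' * chainSumHead N k L d m l' := by
      refine Finset.sum_nbij' (fun l => l - 1) (fun l' => l' + 1) ?_ ?_ ?_ ?_ ?_
      · intro l hl; simp only [Finset.mem_Icc] at hl ⊢; omega
      · intro l' hl'; simp only [Finset.mem_Icc] at hl' ⊢; omega
      · intro l hl; simp only [Finset.mem_Icc] at hl; omega
      · intro l' hl'; simp only [Finset.mem_Icc] at hl'; omega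
      · intro l _; rfl
    rw [hre]
    have hicc : Finset.Icc 0 (d-1) = insert 0 (Finset.Icc 1 (d-1)) := by
      ext a; simp only [Finset.mem_Icc, Finset.mem_insert]; omega
    rw [hicc, Finset.sum_insert (by simp)]
    have hhead0 : (-1 : ℚ) ^ (0:ℕ) * chainSumHead N k L d m 0 = L d m := by
      rw [pow_zero, one_mul, chainSumHead_eq N k L d m 0 hm]
      rw [Finset.sum_eq_single_of_mem d (Finset.mem_Icc.mpr ⟨hd, le_rfl⟩)
        (fun d1 hd1 hne => ?_)]
      · rw [Nat.sub_self, chainSum_zero_len]; simp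
      · rw [Finset.mem_Icc] at hd1
        rw [chainSum_zero_len]
        have : ¬ (d - d1 = 0) := by omega
        simp [this]
    rw [hhead0]
    have htail : ∑ l' ∈ Finset.Icc 1 (d-1), (-1 : ℚ) ^ l' * chainSumHead N k L d m l'
        = - ∑ d1 ∈ Finset.Icc 1 (d-1),
            L d1 m * gammaCoeff N k L (d - d1) (m + (N - k) * d1) := by
      have hstep : ∀ l' ∈ Finset.Icc 1 (d-1),
          (-1 : ℚ) ^ l' * chainSumHead N k L d m l'
            = ∑ d1 ∈ Finset.Icc 1 d,
                (-1 : ℚ) ^ l' * (L d1 m * chainSum N k L (d - d1) (m + (N - k) * d1) l') := by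
        intro l' _
        rw [chainSumHead_eq N k L d m l' hm, Finset.mul_sum]
      rw [Finset.sum_congr rfl hstep, Finset.sum_comm]
      rw [← Finset.sum_neg_distrib]
      have hsub : Finset.Icc 1 (d-1) ⊆ Finset.Icc 1 d := by
        intro a ha; rw [Finset.mem_Icc] at ha ⊢; omega
      rw [← Finset.sum_subset hsub (fun d1 hd1 hd1n => ?_)]
      · refine Finset.sum_congr rfl fun d1 hd1 => ?_
        rw [Finset.mem_Icc] at hd1
        rw [gammaCoeff_eq_sum_chainSum, Finset.mul_sum, ← Finset.sum_neg_distrib]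
        rw [Finset.sum_subset (Finset.Icc_subset_Icc_right (by omega) :
            Finset.Icc 1 (d - d1) ⊆ Finset.Icc 1 (d-1)) (fun l' hl' hl'n => ?_)]
        · refine Finset.sum_congr rfl fun l' hl' => ?_
          rw [Finset.mem_Icc] at hl'
          obtain ⟨l'', rfl⟩ : ∃ l'', l' = l'' + 1 := ⟨l' - 1, by omega⟩
          simp only [Nat.add_sub_cancel, pow_succ]
          ring
        · rw [Finset.mem_Icc] at hl' hl'n
          rw [chainSum_eq_zero N k L (d - d1) _ l' (by omega)]
          ring
      · rw [Finset.mem_Icc] at hd1 hd1n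
        have hdd : d1 = d := by omega
        subst hdd
        refine Finset.sum_eq_zero fun l' hl' => ?_
        rw [Finset.mem_Icc] at hl'
        rw [Nat.sub_self, chainSum_eq_zero N k L 0 _ l' (by omega)]
        ring
    rw [htail]
    ring
  · -- vacuous case: everything vanishes
    rw [gammaCoeff_eq_zero N k L d m hm, gammaCoeff_eq_zero N k L d (m+1) (by omega)]
    have hLz : L d m = 0 := by
      by_contra h
      have := (hL d hd m h).2
      omega
    rw [hLz]
    rw [Finset.sum_eq_zero (fun d1 hd1 => ?_)]
    · ring
    · rw [Finset.mem_Icc] at hd1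
      rcases eq_or_ne (L d1 m) 0 with h | h
      · rw [h]; ring
      · rw [gammaCoeff_eq_zero N k L (d - d1) _ ?_]
        · ring
        · have hc : ((d - d1 : ℕ) : ℤ) = (d : ℤ) - (d1 : ℤ) := by omega
          rw [hc]
          have hexp : (N - k) * ((d:ℤ) - d1) = (N - k) * d - (N - k) * d1 := by ring
          omega

lemma conv_sum_eq (N k : ℤ) (hNk : 2 ≤ N - k) (A : Type*) [CommRing A] [Algebra ℚ A]
    (q x : A) (L : ℕ → ℤ → ℚ)
    (hL : ∀ d : ℕ, 1 ≤ d → ∀ m : ℤ, L d m ≠ 0 → 0 ≤ m ∧ m ≤ N - 1 - (N - k) * d)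
    (m : ℤ) (hm0 : 0 ≤ m) :
    ∑ d ∈ Finset.Icc 1 N.toNat, ∑ e ∈ Finset.Icc 1 N.toNat,
        (L d m * gammaCoeff N k L e (m + (N - k) * d)) •
          (q ^ (d + e) * x ^ (N - 1 - m - (N - k) * ((d + e : ℕ) : ℤ)).toNat)
      = ∑ s ∈ Finset.Icc 1 N.toNat,
          (∑ d1 ∈ Finset.Icc 1 (s - 1),
            L d1 m * gammaCoeff N k L (s - d1) (m + (N - k) * d1)) •
            (q ^ s * x ^ (N - 1 - m - (N - k) * (s : ℤ)).toNat) := by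
  classical
  have hsupp : ∀ d e : ℕ, 1 ≤ d → 1 ≤ e →
      L d m * gammaCoeff N k L e (m + (N - k) * d) ≠ 0 → d + e ≤ N.toNat := by
    intro d e hd he hne
    have hLd : L d m ≠ 0 := fun h => hne (by rw [h, zero_mul])
    have hg : gammaCoeff N k L e (m + (N - k) * d) ≠ 0 :=
      fun h => hne (by rw [h, mul_zero])
    have h1 := (hL d hd m hLd).2
    have h2 : m + (N - k) * d ≤ N - 1 - (N - k) * e := by
      by_contra h
      exact hg (gammaCoeff_eq_zero N k L e _ (by omega))
    have hd2 : (2:ℤ) * (d:ℤ) ≤ (N - k) * (d:ℤ) :=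
      mul_le_mul_of_nonneg_right hNk (by positivity)
    have he2 : (2:ℤ) * (e:ℤ) ≤ (N - k) * (e:ℤ) :=
      mul_le_mul_of_nonneg_right hNk (by positivity)
    have hfin : 2 * ((d:ℤ) + (e:ℤ)) ≤ N - 1 := by linarith
    omega
  -- rewrite both sides as sums over filtered sets of pairs
  rw [← Finset.sum_product']
  have hrhs : ∀ s ∈ Finset.Icc 1 N.toNat,
      (∑ d1 ∈ Finset.Icc 1 (s - 1),
        L d1 m * gammaCoeff N k L (s - d1) (m + (N - k) * d1)) •
        (q ^ s * x ^ (N - 1 - m - (N - k) * (s : ℤ)).toNat)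
      = ∑ d1 ∈ Finset.Icc 1 (s - 1),
          (L d1 m * gammaCoeff N k L (s - d1) (m + (N - k) * d1)) •
            (q ^ s * x ^ (N - 1 - m - (N - k) * (s : ℤ)).toNat) := by
    intro s _
    rw [Finset.sum_smul]
  rw [Finset.sum_congr rfl hrhs, Finset.sum_sigma']
  -- drop the zero terms on both sides
  rw [← Finset.sum_filter_of_ne (s := (Finset.Icc 1 N.toNat) ×ˢ (Finset.Icc 1 N.toNat))
    (p := fun p : ℕ × ℕ => L p.1 m * gammaCoeff N k L p.2 (m + (N - k) * p.1) ≠ 0)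
    (fun p _ hne h => hne (by rw [h, zero_smul]))]
  rw [← Finset.sum_filter_of_ne
    (s := (Finset.Icc 1 N.toNat).sigma fun s => Finset.Icc 1 (s - 1))
    (p := fun p : Σ _ : ℕ, ℕ =>
      L p.2 m * gammaCoeff N k L (p.1 - p.2) (m + (N - k) * p.2) ≠ 0)
    (fun p _ hne h => hne (by rw [h, zero_smul]))]
  refine Finset.sum_nbij' (fun p => ⟨p.1 + p.2, p.1⟩) (fun p => (p.2, p.1 - p.2)) ?_ ?_ ?_ ?_ ?_
  · rintro ⟨d, e⟩ hp
    simp only [Finset.mem_filter, Finset.mem_product, Finset.mem_Icc, Finset.mem_sigma] at hp ⊢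
    obtain ⟨⟨⟨hd1, _⟩, ⟨he1, _⟩⟩, hne⟩ := hp
    have := hsupp d e hd1 he1 hne
    refine ⟨⟨by omega, by omega⟩, ?_⟩
    simpa [Nat.add_sub_cancel_left] using hne
  · rintro ⟨s, d1⟩ hp
    simp only [Finset.mem_filter, Finset.mem_sigma, Finset.mem_Icc, Finset.mem_product] at hp ⊢
    obtain ⟨⟨⟨hs1, hs2⟩, ⟨hd11, hd12⟩⟩, hne⟩ := hp
    refine ⟨?_, hne⟩
    omega
  · rintro ⟨d, e⟩ hp
    simp [Nat.add_sub_cancel_left]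
  · rintro ⟨s, d1⟩ hp
    simp only [Finset.mem_filter, Finset.mem_sigma, Finset.mem_Icc] at hp
    obtain ⟨⟨⟨hs1, hs2⟩, ⟨hd11, hd12⟩⟩, hne⟩ := hp
    have hds : d1 + (s - d1) = s := by omega
    simp only [hds]
  · rintro ⟨d, e⟩ hp
    simp only [Finset.mem_filter, Finset.mem_product, Finset.mem_Icc] at hp
    obtain ⟨⟨⟨hd1, _⟩, ⟨he1, _⟩⟩, hne⟩ := hp
    simp only [Nat.add_sub_cancel_left]

/-- Abstract form of the main relation of the quantum Kähler subring of a Fano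
hypersurface `M_N^k` with `N − k ≥ 2`:  from the multiplication rule
`x · O_{N−2−m} = O_{N−1−m} + Σ_d q^d L^d_m O_{N−1−m−(N−k)d}` one gets
`O_{N−1−m} = x^{N−1−m} − Σ_d q^d γ^{N,k,d}_m x^{N−1−m−(N−k)d}`, and for `m = 0`
the main relation `x^{N−1} = Σ_d γ^{N,k,d}_0 q^d x^{N−1−(N−k)d}`.
(Since `L^d_m = 0` unless `0 ≤ m ≤ N−1−(N−k)d`, all the sums over `d ≥ 1`
are supported in `1 ≤ d ≤ N`, so they are written as finite sums.) -/
theorem main_relation_from_multiplication (N k : ℤ) (hk : 1 ≤ k) (hNk : 2 ≤ N - k)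
    (A : Type*) [CommRing A] [Algebra ℚ A] (q x : A)
    (O : ℤ → A) (hO0 : O 0 = 1)
    (hOneg : ∀ j : ℤ, j < 0 → O j = 0) (hOtop : ∀ j : ℤ, N - 1 ≤ j → O j = 0)
    (L : ℕ → ℤ → ℚ)
    (hL : ∀ d : ℕ, 1 ≤ d → ∀ m : ℤ, L d m ≠ 0 → 0 ≤ m ∧ m ≤ N - 1 - (N - k) * d)
    (hmul : ∀ m : ℤ, 0 ≤ m → m ≤ N - 2 →
      x * O (N - 2 - m) = O (N - 1 - m)
        + ∑ d ∈ Finset.Icc 1 N.toNat,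
            (L d m) • (q ^ d * O (N - 1 - m - (N - k) * (d : ℤ)))) :
    (∀ m : ℤ, 0 ≤ m → m ≤ N - 2 →
      O (N - 1 - m) = x ^ (N - 1 - m).toNat
        - ∑ d ∈ Finset.Icc 1 N.toNat,
            (gammaCoeff N k L d m) • (q ^ d * x ^ (N - 1 - m - (N - k) * (d : ℤ)).toNat))
    ∧ x ^ (N - 1).toNat
        = ∑ d ∈ Finset.Icc 1 N.toNat,
            (gammaCoeff N k L d 0) • (q ^ d * x ^ (N - 1 - (N - k) * (d : ℤ)).toNat) := by
  classical
  have hmain : ∀ n : ℕ, ∀ m : ℤ, 0 ≤ m → m ≤ N - 1 → (N - 1 - m).toNat = n →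
      O (N - 1 - m) = x ^ (N - 1 - m).toNat
        - ∑ d ∈ Finset.Icc 1 N.toNat,
            (gammaCoeff N k L d m) • (q ^ d * x ^ (N - 1 - m - (N - k) * (d : ℤ)).toNat) := by
    intro n
    induction n using Nat.strong_induction_on with
    | _ n IH =>
      intro m hm0 hm1 hn
      rcases eq_or_lt_of_le hm1 with heq | hlt
      · -- base case : m = N - 1
        have h0 : N - 1 - m = 0 := by omega
        have hz : ∀ d ∈ Finset.Icc 1 N.toNat,
            gammaCoeff N k L d m • (q ^ d * x ^ (N - 1 - m - (N - k) * (d : ℤ)).toNat)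
              = 0 := by
          intro d hd
          rw [Finset.mem_Icc] at hd
          have hdpos : (0:ℤ) < (d:ℤ) := by exact_mod_cast hd.1
          have hprod : (0:ℤ) < (N - k) * (d:ℤ) := mul_pos (by omega) hdpos
          rw [gammaCoeff_eq_zero N k L d m (by linarith), zero_smul]
        rw [Finset.sum_eq_zero hz, h0, hO0]
        simp
      · -- inductive case : m ≤ N - 2
        have hm2 : m ≤ N - 2 := by omega
        have hmulm := hmul m hm0 hm2
        rw [show N - 2 - m = N - 1 - (m+1) from by ring] at hmulm
        have hOm : O (N - 1 - m) = x * O (N - 1 - (m+1))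
            - ∑ d ∈ Finset.Icc 1 N.toNat,
                L d m • (q ^ d * O (N - 1 - m - (N - k) * (d:ℤ))) := by
          linear_combination -hmulm
        have hIH1 : O (N - 1 - (m+1)) = x ^ (N - 1 - (m+1)).toNat
            - ∑ e ∈ Finset.Icc 1 N.toNat, (gammaCoeff N k L e (m+1)) •
                (q ^ e * x ^ (N - 1 - (m+1) - (N - k) * (e:ℤ)).toNat) :=
          IH (N - 1 - (m+1)).toNat (by omega) (m+1) (by omega) (by omega) rfl
        have hA : x * O (N - 1 - (m+1)) = x ^ (N - 1 - m).toNat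
            - ∑ e ∈ Finset.Icc 1 N.toNat, (gammaCoeff N k L e (m+1)) •
                (q ^ e * x ^ (N - 1 - m - (N - k) * (e:ℤ)).toNat) := by
          rw [hIH1, mul_sub, Finset.mul_sum]
          congr 1
          · rw [← pow_succ']
            congr 1
            omega
          · refine Finset.sum_congr rfl fun e he => ?_
            rcases eq_or_ne (gammaCoeff N k L e (m+1)) 0 with h | h
            · rw [h, zero_smul, zero_smul, mul_zero]
            · have hbound : m + 1 ≤ N - 1 - (N - k) * (e:ℤ) := by
                by_contra hc
                exact h (gammaCoeff_eq_zero N k L e (m+1) (by omega))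
              rw [mul_smul_comm]
              congr 1
              rw [mul_left_comm]
              congr 1
              rw [← pow_succ']
              congr 1
              omega
        have hB : ∑ d ∈ Finset.Icc 1 N.toNat,
              L d m • (q ^ d * O (N - 1 - m - (N - k) * (d:ℤ)))
            = ∑ d ∈ Finset.Icc 1 N.toNat,
                L d m • (q ^ d * x ^ (N - 1 - m - (N - k) * (d:ℤ)).toNat)
              - ∑ d ∈ Finset.Icc 1 N.toNat, ∑ e ∈ Finset.Icc 1 N.toNat,
                  (L d m * gammaCoeff N k L e (m + (N - k) * d)) •
                    (q ^ (d + e) * x ^ (N - 1 - m - (N - k) * ((d + e : ℕ) : ℤ)).toNat) := by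
          rw [← Finset.sum_sub_distrib]
          refine Finset.sum_congr rfl fun d hd => ?_
          rw [Finset.mem_Icc] at hd
          rcases eq_or_ne (L d m) 0 with h | h
          · rw [h]
            simp
          · have hub := (hL d hd.1 m h).2
            have hdpos : (0:ℤ) < (d:ℤ) := by exact_mod_cast hd.1
            have hprod : (0:ℤ) < (N - k) * (d:ℤ) := mul_pos (by omega) hdpos
            have harg : N - 1 - m - (N - k) * (d:ℤ) = N - 1 - (m + (N - k) * d) := by
              ring
            have hIH2 : O (N - 1 - (m + (N - k) * (d:ℤ)))
                = x ^ (N - 1 - (m + (N - k) * (d:ℤ))).toNat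
                  - ∑ e ∈ Finset.Icc 1 N.toNat,
                      (gammaCoeff N k L e (m + (N - k) * d)) •
                        (q ^ e * x ^ (N - 1 - (m + (N - k) * (d:ℤ))
                          - (N - k) * (e:ℤ)).toNat) :=
              IH (N - 1 - (m + (N - k) * (d:ℤ))).toNat (by omega)
                (m + (N - k) * d) (by omega) (by omega) rfl
            have hIH2' : O (N - 1 - m - (N - k) * (d:ℤ))
                = x ^ (N - 1 - m - (N - k) * (d:ℤ)).toNat
                  - ∑ e ∈ Finset.Icc 1 N.toNat,
                      (gammaCoeff N k L e (m + (N - k) * d)) •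
                        (q ^ e * x ^ (N - 1 - m - (N - k) * ((d + e : ℕ) : ℤ)).toNat) := by
              rw [harg, hIH2]
              congr 1
              refine Finset.sum_congr rfl fun e he => ?_
              have hexp : N - 1 - (m + (N - k) * (d:ℤ)) - (N - k) * (e:ℤ)
                  = N - 1 - m - (N - k) * ((d + e : ℕ) : ℤ) := by
                push_cast
                ring
              rw [hexp]
            rw [hIH2', mul_sub, smul_sub]
            congr 1
            rw [Finset.mul_sum, Finset.smul_sum]
            refine Finset.sum_congr rfl fun e he => ?_
            rw [mul_smul_comm, smul_smul, ← mul_assoc, ← pow_add]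
        have hconv := conv_sum_eq N k hNk A q x L hL m hm0
        have hexp : ∑ d ∈ Finset.Icc 1 N.toNat,
              (gammaCoeff N k L d m) • (q ^ d * x ^ (N - 1 - m - (N - k) * (d : ℤ)).toNat)
            = (∑ d ∈ Finset.Icc 1 N.toNat, (gammaCoeff N k L d (m+1)) •
                  (q ^ d * x ^ (N - 1 - m - (N - k) * (d : ℤ)).toNat)
                + ∑ d ∈ Finset.Icc 1 N.toNat, (L d m) •
                  (q ^ d * x ^ (N - 1 - m - (N - k) * (d : ℤ)).toNat))
              - ∑ d ∈ Finset.Icc 1 N.toNat,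
                  (∑ d1 ∈ Finset.Icc 1 (d - 1),
                    L d1 m * gammaCoeff N k L (d - d1) (m + (N - k) * d1)) •
                  (q ^ d * x ^ (N - 1 - m - (N - k) * (d : ℤ)).toNat) := by
          rw [← Finset.sum_add_distrib, ← Finset.sum_sub_distrib]
          refine Finset.sum_congr rfl fun d hd => ?_
          rw [Finset.mem_Icc] at hd
          rw [gammaCoeff_rec N k L hL d hd.1 m, sub_smul, add_smul]
        rw [hOm, hA, hB, hconv, hexp]
        ring
  refine ⟨fun m hm0 hm2 => hmain (N - 1 - m).toNat m hm0 (by omega) rfl, ?_⟩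
  have h0 := hmain (N - 1).toNat 0 le_rfl (by omega) (by rw [sub_zero])
  simp only [sub_zero] at h0
  rw [hOtop (N - 1) le_rfl] at h0
  exact sub_eq_zero.mp h0.symm
end

section
/- Let k ≥ 2 and N be integers with N − k ≥ 2. Let L : ℤ → ℚ satisfy L_m = 0 unless 0 ≤ m ≤ k−1, and let L' : ℤ → ℚ satisfy L'_m = 0 unless 0 ≤ m ≤ 2k−N−2. Define L''_m := (1/2)(L'_{m−1} + L'_m + 2 L_m L_{m+(N−k)}) for all m ∈ ℤ (the degree-2 Fano recursion of Theorem 1). Then γ^{N,k,2}_0 computed from the family (L^1 = L, L^2 = L'') equals γ^{N+1,k,2}_0 computed from the family (L^1 = L, L^2 = L'); explicitly, Σ_{m=0}^{N−1−2(N−k)} L''_m − Σ_{0 ≤ j_1 ≤ j_2 ≤ N−1−2(N−k)} L_{j_1} L_{j_2+(N−k)} = Σ_{m=0}^{N−2(N+1−k)} L'_m − Σ_{0 ≤ j_1 ≤ j_2 ≤ N−2(N+1−k)} L_{j_1} L_{j_2+(N+1−k)}. -/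
open Finset

lemma sum_Icc_neg_one (c : ℤ) (f : ℤ → ℚ) (h : f (-1) = 0) :
    ∑ m ∈ Finset.Icc (-1 : ℤ) c, f m = ∑ m ∈ Finset.Icc (0 : ℤ) c, f m := by
  rcases le_or_gt 0 c with hc | hc
  · have hset : Finset.Icc (-1 : ℤ) c = insert (-1) (Finset.Icc (0 : ℤ) c) := by
      ext x; simp [Finset.mem_Icc]; omega
    rw [hset, Finset.sum_insert (by simp), h, zero_add]
  · rcases eq_or_lt_of_le (by omega : c ≤ -1) with hc1 | hc1
    · subst hc1; simp [h]
    · rw [Finset.Icc_eq_empty (by omega), Finset.Icc_eq_empty (by omega)]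

lemma sum_shift (a b c : ℤ) (f : ℤ → ℚ) :
    ∑ m ∈ Finset.Icc a b, f (m + c) = ∑ m ∈ Finset.Icc (a + c) (b + c), f m := by
  apply Finset.sum_nbij' (fun m => m + c) (fun m => m - c) <;>
    simp [Finset.mem_Icc] <;> omega

lemma sum_Icc_top (c : ℤ) (f : ℤ → ℚ) (h : f c = 0) :
    ∑ m ∈ Finset.Icc (0 : ℤ) c, f m = ∑ m ∈ Finset.Icc (0 : ℤ) (c - 1), f m := by
  rcases le_or_gt 0 c with hc | hc
  · rw [show Finset.Icc (0:ℤ) c = insert c (Finset.Icc (0:ℤ) (c-1)) by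
      ext x; simp [Finset.mem_Icc]; omega,
      Finset.sum_insert (by simp), h, zero_add]
  · rw [Finset.Icc_eq_empty (by omega), Finset.Icc_eq_empty (by omega)]

lemma gamma2 (N k : ℤ) (F1 F2 : ℤ → ℚ) :
    gammaCoeff N k (fun d => if d = 1 then F1 else if d = 2 then F2 else fun _ => 0) 2 0
    = (∑ m ∈ Finset.Icc (0 : ℤ) (N - 1 - (N - k) * 2), F2 m)
      - ∑ j2 ∈ Finset.Icc (0 : ℤ) (N - 1 - (N - k) * 2),
          ∑ j1 ∈ Finset.Icc (0 : ℤ) j2, F1 j1 * F1 (j2 + (N - k)) := by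
  rw [gammaCoeff]
  have hd1 : (Fintype.piFinset fun _ : Fin 1 => Finset.Icc 1 2).filter
      (fun dv => ∑ i, dv i = 2) = {fun _ => 2} := by
    ext dv
    simp [Fintype.mem_piFinset, Fin.sum_univ_one, Finset.mem_Icc, funext_iff,
      Fin.forall_fin_one]
    omega
  have hd2 : (Fintype.piFinset fun _ : Fin 2 => Finset.Icc 1 2).filter
      (fun dv => ∑ i, dv i = 2) = {fun _ => 1} := by
    ext dv
    simp [Fintype.mem_piFinset, Fin.sum_univ_two, Finset.mem_Icc, funext_iff,
      Fin.forall_fin_two]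
    omega
  rw [show Finset.Icc (1:ℕ) 2 = ({1, 2} : Finset ℕ) from rfl] at hd1 hd2
  rw [show Finset.Icc (1:ℕ) 2 = ({1, 2} : Finset ℕ) from rfl,
    Finset.sum_insert (by decide), Finset.sum_singleton, hd1, hd2]
  simp only [Finset.sum_singleton, Fin.prod_univ_one, Fin.prod_univ_two,
    show Finset.Iio (0 : Fin 1) = ∅ by decide, show Finset.Iio (0 : Fin 2) = ∅ by decide,
    show Finset.Iio (1 : Fin 2) = {0} by decide, Finset.sum_empty,
    zero_mul, add_zero, Nat.cast_ofNat, Nat.cast_one, pow_zero, pow_one, one_mul]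
  norm_num
  have h1 : ∑ x ∈ Finset.filter (fun jv => ∀ (a b : Fin 1), jv a ≤ jv b)
        (Fintype.piFinset fun _ : Fin 1 => Finset.Icc (0:ℤ) (N - 1 - (N - k) * 2)),
      F2 (x 0) = ∑ m ∈ Finset.Icc (0:ℤ) (N - 1 - (N - k) * 2), F2 m := by
    rw [Finset.filter_true_of_mem (fun jv _ a b => by
      have : a = b := Subsingleton.elim a b
      simp [this])]
    apply Finset.sum_nbij' (fun jv => jv 0) (fun m => fun _ => m)
    · intro jv hjv; exact (Fintype.mem_piFinset.mp hjv) 0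
    · intro m hm; exact Fintype.mem_piFinset.mpr (fun _ => hm)
    · intro jv _; funext i; have : i = 0 := Subsingleton.elim i 0; rw [this]
    · intro m _; rfl
    · intro jv _; rfl
  have h2 : ∑ x ∈ Finset.filter (fun jv => ∀ (a b : Fin 2), a ≤ b → jv a ≤ jv b)
        (Fintype.piFinset fun _ : Fin 2 => Finset.Icc (0:ℤ) (N - 1 - (N - k) * 2)),
      F1 (x 0) * F1 (x 1 + (N - k))
      = ∑ j2 ∈ Finset.Icc (0 : ℤ) (N - 1 - (N - k) * 2),
          ∑ j1 ∈ Finset.Icc (0 : ℤ) j2, F1 j1 * F1 (j2 + (N - k)) := by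
    rw [Finset.sum_sigma']
    apply Finset.sum_nbij' (fun jv => (⟨jv 1, jv 0⟩ : Σ _ : ℤ, ℤ)) (fun x => ![x.2, x.1])
    · intro jv hjv
      rw [Finset.mem_filter] at hjv
      obtain ⟨hmem, hmono⟩ := hjv
      have h0 := (Fintype.mem_piFinset.mp hmem) 0
      have h1 := (Fintype.mem_piFinset.mp hmem) 1
      rw [Finset.mem_Icc] at h0 h1
      have hle := hmono 0 1 (by decide)
      simp only [Finset.mem_sigma, Finset.mem_Icc]
      exact ⟨⟨h1.1, h1.2⟩, ⟨h0.1, hle⟩⟩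
    · intro x hx
      rw [Finset.mem_sigma, Finset.mem_Icc, Finset.mem_Icc] at hx
      rw [Finset.mem_filter]
      constructor
      · refine Fintype.mem_piFinset.mpr (fun i => ?_)
        fin_cases i <;> simp [Finset.mem_Icc] <;> omega
      · intro a b hab
        fin_cases a <;> fin_cases b <;> simp_all <;> omega
    · intro jv _; funext i; fin_cases i <;> rfl
    · intro x _; rfl
    · intro jv _; rfl
  norm_num at h1 h2
  rw [h1, h2]
  ring


/-- Degree-2 case of `γ_0^{N,k,d} = γ_0^{N+1,k,d}` for the Fano recursion of Theorem 1:
with `L` the line constants, `L'` the conic constants in dimension one more, and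
`L''_m = (1/2)(L'_{m−1} + L'_m + 2 L_m L_{m+(N−k)})`, one has
`γ^{N,k,2}_0` (from `(L, L'')`) `= γ^{N+1,k,2}_0` (from `(L, L')`); explicitly,
`Σ_{m=0}^{N−1−2(N−k)} L''_m − Σ_{0≤j₁≤j₂≤N−1−2(N−k)} L_{j₁} L_{j₂+(N−k)}
 = Σ_{m=0}^{N−2(N+1−k)} L'_m − Σ_{0≤j₁≤j₂≤N−2(N+1−k)} L_{j₁} L_{j₂+(N+1−k)}`. -/
theorem gamma0_deg2_invariant (k N : ℤ) (hk : 2 ≤ k) (hNk : 2 ≤ N - k)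
    (L L' : ℤ → ℚ)
    (hL : ∀ m : ℤ, L m ≠ 0 → 0 ≤ m ∧ m ≤ k - 1)
    (hL' : ∀ m : ℤ, L' m ≠ 0 → 0 ≤ m ∧ m ≤ 2 * k - N - 2)
    (L'' : ℤ → ℚ)
    (hL'' : ∀ m : ℤ, L'' m = (1/2) * (L' (m - 1) + L' m + 2 * L m * L (m + (N - k)))) :
    gammaCoeff N k (fun d => if d = 1 then L else if d = 2 then L'' else fun _ => 0) 2 0
      = gammaCoeff (N + 1) k (fun d => if d = 1 then L else if d = 2 then L' else fun _ => 0) 2 0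
    ∧ (∑ m ∈ Finset.Icc (0 : ℤ) (N - 1 - 2 * (N - k)), L'' m)
        - (∑ j2 ∈ Finset.Icc (0 : ℤ) (N - 1 - 2 * (N - k)),
            ∑ j1 ∈ Finset.Icc (0 : ℤ) j2, L j1 * L (j2 + (N - k)))
      = (∑ m ∈ Finset.Icc (0 : ℤ) (N - 2 * (N + 1 - k)), L' m)
        - (∑ j2 ∈ Finset.Icc (0 : ℤ) (N - 2 * (N + 1 - k)),
            ∑ j1 ∈ Finset.Icc (0 : ℤ) j2, L j1 * L (j2 + (N + 1 - k))) := by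
  set B : ℤ := N - 1 - 2 * (N - k) with hBdef
  have hL'neg : L' (-1) = 0 := by
    by_contra h; have := hL' _ h; omega
  have hL'B : L' B = 0 := by
    by_contra h; have := hL' _ h; omega
  have hBA : N - 2 * (N + 1 - k) = B - 1 := by rw [hBdef]; ring
  -- rewrite the L'' sum
  have e1 : ∑ m ∈ Finset.Icc (0 : ℤ) B, L'' m
      = (∑ m ∈ Finset.Icc (0 : ℤ) (B - 1), L' m)
        + ∑ m ∈ Finset.Icc (0 : ℤ) B, L m * L (m + (N - k)) := by
    have : ∑ m ∈ Finset.Icc (0 : ℤ) B, L'' m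
        = (1/2) * (∑ m ∈ Finset.Icc (0 : ℤ) B, L' (m + (-1)))
          + (1/2) * (∑ m ∈ Finset.Icc (0 : ℤ) B, L' m)
          + ∑ m ∈ Finset.Icc (0 : ℤ) B, L m * L (m + (N - k)) := by
      rw [Finset.mul_sum, Finset.mul_sum, ← Finset.sum_add_distrib,
        ← Finset.sum_add_distrib]
      refine Finset.sum_congr rfl (fun m _ => ?_)
      rw [hL'' m, show m + (-1) = m - 1 by ring]
      ring
    rw [this, sum_shift, show (0:ℤ) + (-1) = -1 by ring, sum_Icc_neg_one _ _ hL'neg,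
      sum_Icc_top _ _ hL'B]
    rw [show B + -1 = B - 1 by ring]
    ring
  -- split the double sum
  have e2 : ∑ j2 ∈ Finset.Icc (0 : ℤ) B, ∑ j1 ∈ Finset.Icc (0 : ℤ) j2, L j1 * L (j2 + (N - k))
      = (∑ m ∈ Finset.Icc (0 : ℤ) B, L m * L (m + (N - k)))
        + ∑ j2 ∈ Finset.Icc (0 : ℤ) (B - 1),
            ∑ j1 ∈ Finset.Icc (0 : ℤ) j2, L j1 * L (j2 + (N + 1 - k)) := by
    have step : ∀ j2 ∈ Finset.Icc (0 : ℤ) B,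
        ∑ j1 ∈ Finset.Icc (0 : ℤ) j2, L j1 * L (j2 + (N - k))
        = L j2 * L (j2 + (N - k))
          + ∑ j1 ∈ Finset.Icc (0 : ℤ) (j2 - 1), L j1 * L (j2 + (N - k)) := by
      intro j2 hj2
      rw [Finset.mem_Icc] at hj2
      rw [show Finset.Icc (0:ℤ) j2 = insert j2 (Finset.Icc (0:ℤ) (j2-1)) by
        ext x; simp [Finset.mem_Icc]; omega,
        Finset.sum_insert (by simp)]
    rw [Finset.sum_congr rfl step, Finset.sum_add_distrib]
    congr 1
    have hsh := sum_shift (-1) (B - 1) 1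
      (fun j2 => ∑ j1 ∈ Finset.Icc (0 : ℤ) (j2 - 1), L j1 * L (j2 + (N - k)))
    simp only [show (-1:ℤ) + 1 = 0 by ring, show B - 1 + 1 = B by ring] at hsh
    rw [← hsh, sum_Icc_neg_one _ _ (by simp)]
    refine Finset.sum_congr rfl (fun m _ => ?_)
    rw [show m + 1 - 1 = m by ring, show m + 1 + (N - k) = m + (N + 1 - k) by ring]
  have key : (∑ m ∈ Finset.Icc (0 : ℤ) B, L'' m)
        - (∑ j2 ∈ Finset.Icc (0 : ℤ) B,
            ∑ j1 ∈ Finset.Icc (0 : ℤ) j2, L j1 * L (j2 + (N - k)))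
      = (∑ m ∈ Finset.Icc (0 : ℤ) (N - 2 * (N + 1 - k)), L' m)
        - (∑ j2 ∈ Finset.Icc (0 : ℤ) (N - 2 * (N + 1 - k)),
            ∑ j1 ∈ Finset.Icc (0 : ℤ) j2, L j1 * L (j2 + (N + 1 - k))) := by
    rw [e1, e2, hBA]; ring
  refine ⟨?_, key⟩
  rw [gamma2, gamma2, show N + 1 - 1 - (N + 1 - k) * 2 = N - 2 * (N + 1 - k) by ring,
    show N - 1 - (N - k) * 2 = B by rw [hBdef]; ring]
  exact key
end

section
/- Let k ≥ 2 and N be integers with N − k ≥ 2. Let L : ℤ → ℚ satisfy L_m = 0 unless 0 ≤ m ≤ k−1, let L' : ℤ → ℚ satisfy L'_m = 0 unless 0 ≤ m ≤ 2k−N−2, and let M : ℤ → ℚ satisfy M_m = 0 unless 0 ≤ m ≤ 3k−2N−3. Define L''_m := (1/2)(L'_{m−1} + L'_m + 2 L_m L_{m+(N−k)}) and L'''_m := (1/18)(4M_{m−2} + 10M_{m−1} + 4M_m + 12L'_{m−1}L_{m+2(N−k)} + 9L'_mL_{m+2(N−k)} + 6L'_mL_{m+1+2(N−k)} + 6L_{m−1}L'_{m−1+(N−k)}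 + 9L_mL'_{m−1+(N−k)} + 12L_mL'_{m+(N−k)} + 18L_mL_{m+(N−k)}L_{m+2(N−k)}) (the degree-2 and degree-3 Fano recursions of Theorem 1). Then γ^{N,k,3}_0 computed from the family (L^1 = L, L^2 = L'', L^3 = L''') equals γ^{N+1,k,3}_0 computed from the family (L^1 = L, L^2 = L', L^3 = M). -/
open Finset

lemma sum_shift_add (a b c : ℤ) (f : ℤ → ℚ) :
    ∑ j ∈ Icc a b, f (j + c) = ∑ j ∈ Icc (a + c) (b + c), f j := by
  rw [← Finset.map_add_right_Icc a b c, Finset.sum_map]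
  simp [addRightEmbedding]

lemma sum_shift_sub (a b c : ℤ) (f : ℤ → ℚ) :
    ∑ j ∈ Icc a b, f (j - c) = ∑ j ∈ Icc (a - c) (b - c), f j := by
  have := sum_shift_add a b (-c) f
  simpa [sub_eq_add_neg] using this

lemma sum_split_bot {a b : ℤ} (h : a ≤ b) (f : ℤ → ℚ) :
    ∑ j ∈ Icc a b, f j = f a + ∑ j ∈ Icc (a + 1) b, f j := by
  rw [show Icc a b = insert a (Icc (a+1) b) by ext x; simp only [Finset.mem_Icc, Finset.mem_insert]; omega,
    Finset.sum_insert (by simp [Finset.mem_Icc])]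

lemma sum_split_top {a b : ℤ} (h : a ≤ b) (f : ℤ → ℚ) :
    ∑ j ∈ Icc a b, f j = (∑ j ∈ Icc a (b - 1), f j) + f b := by
  rw [show Icc a b = insert b (Icc a (b-1)) by ext x; simp only [Finset.mem_Icc, Finset.mem_insert]; omega,
    Finset.sum_insert (by simp [Finset.mem_Icc])]
  ring

lemma sum_extend_top (f : ℤ → ℚ) (a b : ℤ) (hb : a ≤ b → f b = 0) :
    ∑ j ∈ Icc a b, f j = ∑ j ∈ Icc a (b - 1), f j := by
  rcases le_or_gt a b with h|h
  · rw [sum_split_top h, hb h, add_zero]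
  · rw [Icc_eq_empty (by omega), Icc_eq_empty (by omega)]

lemma sum_extend_bot (f : ℤ → ℚ) (a b : ℤ) (ha : a ≤ b → f a = 0) :
    ∑ j ∈ Icc a b, f j = ∑ j ∈ Icc (a + 1) b, f j := by
  rcases le_or_gt a b with h|h
  · rw [sum_split_bot h, ha h, zero_add]
  · rw [Icc_eq_empty (by omega), Icc_eq_empty (by omega)]

lemma sum_const_mul (s : Finset ℤ) (c : ℚ) (f : ℤ → ℚ) :
    ∑ j ∈ s, c * f j = c * ∑ j ∈ s, f j := (Finset.mul_sum s f c).symm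

lemma sum_sum_const_mul (s : Finset ℤ) (t : ℤ → Finset ℤ) (c : ℚ) (f : ℤ → ℤ → ℚ) :
    ∑ j1 ∈ s, ∑ j2 ∈ t j1, c * f j1 j2 = c * ∑ j1 ∈ s, ∑ j2 ∈ t j1, f j1 j2 := by
  simp [Finset.mul_sum]

lemma trunc_double (f : ℤ → ℤ → ℚ) (U : ℤ)
    (h : ∀ j1 j2 : ℤ, U - 2 < j2 → f j1 j2 = 0) :
    ∑ j1 ∈ Icc (0:ℤ) U, ∑ j2 ∈ Icc j1 U, f j1 j2
      = ∑ j1 ∈ Icc (0:ℤ) (U - 2), ∑ j2 ∈ Icc j1 (U - 2), f j1 j2 := by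
  have step1 : ∑ j1 ∈ Icc (0:ℤ) U, (∑ j2 ∈ Icc j1 U, f j1 j2)
      = ∑ j1 ∈ Icc (0:ℤ) (U - 2), ∑ j2 ∈ Icc j1 U, f j1 j2 := by
    symm
    apply Finset.sum_subset (Finset.Icc_subset_Icc le_rfl (by omega))
    intro x hx hnx
    apply Finset.sum_eq_zero
    intro j2 hj2
    simp only [Finset.mem_Icc] at hx hnx hj2
    exact h x j2 (by omega)
  rw [step1]
  refine Finset.sum_congr rfl (fun j1 hj1 => ?_)
  symm
  apply Finset.sum_subset (Finset.Icc_subset_Icc le_rfl (by omega))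
  intro x hx hnx
  simp only [Finset.mem_Icc] at hx hnx
  exact h j1 x (by omega)


lemma sum_pi_one (a b : ℤ) (f : (Fin 1 → ℤ) → ℚ) :
    ∑ jv ∈ (Fintype.piFinset fun _ : Fin 1 => Finset.Icc a b).filter
      (fun jv => ∀ i j : Fin 1, i ≤ j → jv i ≤ jv j), f jv
    = ∑ j ∈ Finset.Icc a b, f ![j] := by
  rw [Finset.filter_true_of_mem
    (fun x _ i j _ => le_of_eq (congrArg x (Subsingleton.elim i j)))]
  apply Finset.sum_nbij' (i := fun jv => jv 0) (j := fun x => ![x])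
  · intro jv h; simpa using (Fintype.mem_piFinset.mp h) 0
  · intro x h; rw [Fintype.mem_piFinset]; intro i; simpa using h
  · intro jv _; funext i
    have : i = 0 := Subsingleton.elim _ _
    subst this; simp
  · intro x _; simp
  · intro jv _; congr 1; funext i
    have : i = 0 := Subsingleton.elim _ _
    subst this; simp

lemma sum_pi_two (a b : ℤ) (f : (Fin 2 → ℤ) → ℚ) :
    ∑ jv ∈ (Fintype.piFinset fun _ : Fin 2 => Finset.Icc a b).filter
      (fun jv => ∀ i j : Fin 2, i ≤ j → jv i ≤ jv j), f jv
    = ∑ j1 ∈ Finset.Icc a b, ∑ j2 ∈ Finset.Icc j1 b, f ![j1, j2] := by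
  have key : ∑ p ∈ (Finset.Icc a b).sigma (fun j1 => Finset.Icc j1 b),
      f ![p.1, p.2] = ∑ j1 ∈ Finset.Icc a b, ∑ j2 ∈ Finset.Icc j1 b, f ![j1, j2] :=
    Finset.sum_sigma _ _ _
  rw [← key]
  apply Finset.sum_nbij' (i := fun jv => (⟨jv 0, jv 1⟩ : Σ _ : ℤ, ℤ))
    (j := fun p => ![p.1, p.2])
  · intro jv h
    rw [Finset.mem_filter, Fintype.mem_piFinset] at h
    obtain ⟨hmem, hmono⟩ := h
    have h0 := hmem 0; have h1 := hmem 1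
    simp only [Finset.mem_Icc] at h0 h1
    have h01 := hmono 0 1 (by decide)
    simp only [Finset.mem_sigma, Finset.mem_Icc]
    exact ⟨⟨h0.1, h0.2⟩, h01, h1.2⟩
  · intro p hp
    simp only [Finset.mem_sigma, Finset.mem_Icc] at hp
    rw [Finset.mem_filter, Fintype.mem_piFinset]
    constructor
    · intro i; fin_cases i <;> simp [Finset.mem_Icc] <;> omega
    · intro i j hij; fin_cases i <;> fin_cases j <;> simp_all <;> omega
  · intro jv _; funext i; fin_cases i <;> simp
  · intro p _; simp
  · intro jv _; congr 1; funext i; fin_cases i <;> simp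

lemma sum_pi_three (a b : ℤ) (f : (Fin 3 → ℤ) → ℚ) :
    ∑ jv ∈ (Fintype.piFinset fun _ : Fin 3 => Finset.Icc a b).filter
      (fun jv => ∀ i j : Fin 3, i ≤ j → jv i ≤ jv j), f jv
    = ∑ j1 ∈ Finset.Icc a b, ∑ j2 ∈ Finset.Icc j1 b, ∑ j3 ∈ Finset.Icc j2 b, f ![j1, j2, j3] := by
  have key : ∑ p ∈ (Finset.Icc a b).sigma
        (fun j1 => (Finset.Icc j1 b).sigma (fun j2 => Finset.Icc j2 b)),
      f ![p.1, p.2.1, p.2.2]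
      = ∑ j1 ∈ Finset.Icc a b, ∑ j2 ∈ Finset.Icc j1 b, ∑ j3 ∈ Finset.Icc j2 b,
          f ![j1, j2, j3] := by
    rw [Finset.sum_sigma]
    exact Finset.sum_congr rfl (fun j1 _ => Finset.sum_sigma _ _ _)
  rw [← key]
  apply Finset.sum_nbij' (i := fun jv => (⟨jv 0, jv 1, jv 2⟩ : Σ _ : ℤ, Σ _ : ℤ, ℤ))
    (j := fun p => ![p.1, p.2.1, p.2.2])
  · intro jv h
    rw [Finset.mem_filter, Fintype.mem_piFinset] at h
    obtain ⟨hmem, hmono⟩ := h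
    have h0 := hmem 0; have h1 := hmem 1; have h2 := hmem 2
    simp only [Finset.mem_Icc] at h0 h1 h2
    have h01 := hmono 0 1 (by decide); have h12 := hmono 1 2 (by decide)
    simp only [Finset.mem_sigma, Finset.mem_Icc]
    exact ⟨⟨h0.1, h0.2⟩, ⟨h01, h1.2⟩, h12, h2.2⟩
  · intro p hp
    simp only [Finset.mem_sigma, Finset.mem_Icc] at hp
    rw [Finset.mem_filter, Fintype.mem_piFinset]
    constructor
    · intro i; fin_cases i <;> simp [Finset.mem_Icc] <;> omega
    · intro i j hij; fin_cases i <;> fin_cases j <;> simp_all <;> omega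
  · intro jv _; funext i; fin_cases i <;> simp
  · intro p _; simp
  · intro jv _; congr 1; funext i; fin_cases i <;> simp

lemma gamma_explicit (N k : ℤ) (F : ℕ → ℤ → ℚ) :
    gammaCoeff N k F 3 0 =
      (∑ j ∈ Finset.Icc (0:ℤ) (N - 1 - (N - k) * 3), F 3 j)
      - (∑ j1 ∈ Finset.Icc (0:ℤ) (N - 1 - (N - k) * 3),
          ∑ j2 ∈ Finset.Icc j1 (N - 1 - (N - k) * 3),
          (F 1 j1 * F 2 (j2 + (N - k)) + F 2 j1 * F 1 (j2 + 2 * (N - k))))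
      + (∑ j1 ∈ Finset.Icc (0:ℤ) (N - 1 - (N - k) * 3),
          ∑ j2 ∈ Finset.Icc j1 (N - 1 - (N - k) * 3),
          ∑ j3 ∈ Finset.Icc j2 (N - 1 - (N - k) * 3),
          F 1 j1 * F 1 (j2 + (N - k)) * F 1 (j3 + 2 * (N - k))) := by
  unfold gammaCoeff
  rw [show (Finset.Icc 1 3 : Finset ℕ) = {1, 2, 3} by decide]
  rw [Finset.sum_insert (by decide), Finset.sum_insert (by decide), Finset.sum_singleton]
  rw [show ((Fintype.piFinset fun _ : Fin 1 => ({1,2,3} : Finset ℕ)).filter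
      (fun dv => ∑ i, dv i = 3)) = {![3]} by decide]
  rw [show ((Fintype.piFinset fun _ : Fin 2 => ({1,2,3} : Finset ℕ)).filter
      (fun dv => ∑ i, dv i = 3)) = {![1,2], ![2,1]} by decide]
  rw [show ((Fintype.piFinset fun _ : Fin 3 => ({1,2,3} : Finset ℕ)).filter
      (fun dv => ∑ i, dv i = 3)) = {![1,1,1]} by decide]
  rw [Finset.sum_singleton, Finset.sum_insert (by decide), Finset.sum_singleton,
    Finset.sum_singleton]
  rw [sum_pi_one, sum_pi_two, sum_pi_two, sum_pi_three]
  simp only [Fin.prod_univ_one, Fin.prod_univ_two, Fin.prod_univ_three,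
    Matrix.cons_val_zero, Matrix.cons_val_one, Matrix.head_cons,
    Matrix.cons_val_two, Matrix.tail_cons]
  rw [show (∑ n ∈ Finset.Iio (0 : Fin 1), ((![3] n : ℕ) : ℤ)) = 0 by decide,
      show (∑ n ∈ Finset.Iio (0 : Fin 2), ((![1,2] n : ℕ) : ℤ)) = 0 by decide,
      show (∑ n ∈ Finset.Iio (1 : Fin 2), ((![1,2] n : ℕ) : ℤ)) = 1 by decide,
      show (∑ n ∈ Finset.Iio (0 : Fin 2), ((![2,1] n : ℕ) : ℤ)) = 0 by decide,
      show (∑ n ∈ Finset.Iio (1 : Fin 2), ((![2,1] n : ℕ) : ℤ)) = 2 by decide,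
      show (∑ n ∈ Finset.Iio (0 : Fin 3), ((![1,1,1] n : ℕ) : ℤ)) = 0 by decide,
      show (∑ n ∈ Finset.Iio (1 : Fin 3), ((![1,1,1] n : ℕ) : ℤ)) = 1 by decide,
      show (∑ n ∈ Finset.Iio (2 : Fin 3), ((![1,1,1] n : ℕ) : ℤ)) = 2 by decide]
  simp only [zero_mul, add_zero, one_mul, Nat.cast_ofNat, pow_zero, pow_one, neg_one_sq]
  simp only [Finset.sum_add_distrib]
  ring

lemma idM_shift (Mf : ℤ → ℚ) (U c B : ℤ) (hM : ∀ m, Mf m ≠ 0 → 0 ≤ m ∧ m ≤ B)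
    (hB : B ≤ U - 2) (hc1 : 0 ≤ c) (hc2 : c ≤ 2) :
    ∑ j ∈ Icc (0:ℤ) U, Mf (j - c) = ∑ j ∈ Icc (0:ℤ) (U - 2), Mf j := by
  rw [sum_shift_sub 0 U c Mf]
  symm
  apply Finset.sum_subset (Finset.Icc_subset_Icc (by omega) (by omega))
  intro x hx hnx
  by_contra h
  have := hM x h
  simp only [Finset.mem_Icc] at hx hnx
  omega

lemma idM0 (Mf : ℤ → ℚ) (U B : ℤ) (hM : ∀ m, Mf m ≠ 0 → 0 ≤ m ∧ m ≤ B) (hB : B ≤ U - 2) :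
    ∑ j ∈ Icc (0:ℤ) U, Mf j = ∑ j ∈ Icc (0:ℤ) (U - 2), Mf j := by
  symm
  apply Finset.sum_subset (Finset.Icc_subset_Icc (by omega) (by omega))
  intro x hx hnx
  by_contra h
  have := hM x h
  simp only [Finset.mem_Icc] at hx hnx
  omega

lemma idX1 (k N : ℤ) (L L' : ℤ → ℚ)
    (hL : ∀ m : ℤ, L m ≠ 0 → 0 ≤ m ∧ m ≤ k - 1)
    (hL' : ∀ m : ℤ, L' m ≠ 0 → 0 ≤ m ∧ m ≤ 2 * k - N - 2) :
    ∑ j ∈ Icc (0:ℤ) (N - 1 - (N - k) * 3), L (j - 1) * L' (j - 1 + (N - k))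
      = ∑ j ∈ Icc (0:ℤ) (N - 1 - (N - k) * 3), L j * L' (j + (N - k)) := by
  set U := N - 1 - (N - k) * 3 with hU
  have h1 : L' (U + (N - k)) = 0 := by by_contra h; have := hL' _ h; omega
  have h2 : L (-1) = 0 := by by_contra h; have := hL _ h; omega
  calc ∑ j ∈ Icc (0:ℤ) U, L (j - 1) * L' (j - 1 + (N - k))
      = ∑ j ∈ Icc (0:ℤ) U, (fun x => L x * L' (x + (N - k))) (j - 1) := rfl
    _ = ∑ j ∈ Icc (0 - 1 : ℤ) (U - 1), L j * L' (j + (N - k)) := by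
        rw [sum_shift_sub 0 U 1 (fun x => L x * L' (x + (N - k)))]
    _ = ∑ j ∈ Icc (0:ℤ) (U - 1), L j * L' (j + (N - k)) := by
        rw [show (0:ℤ) - 1 = -1 by norm_num,
          sum_extend_bot (fun x => L x * L' (x + (N - k))) (-1) (U - 1)
            (fun _ => by show L (-1) * L' (-1 + (N - k)) = 0; rw [h2, zero_mul]),
          show (-1:ℤ) + 1 = 0 by norm_num]
    _ = ∑ j ∈ Icc (0:ℤ) U, L j * L' (j + (N - k)) := by
        rw [sum_extend_top (fun x => L x * L' (x + (N - k))) 0 U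
          (fun _ => by show L U * L' (U + (N - k)) = 0; rw [h1, mul_zero])]

lemma idX2 (k N : ℤ) (L L' : ℤ → ℚ)
    (hL' : ∀ m : ℤ, L' m ≠ 0 → 0 ≤ m ∧ m ≤ 2 * k - N - 2) :
    ∑ j1 ∈ Icc (0:ℤ) (N - 1 - (N - k) * 3), ∑ j2 ∈ Icc j1 (N - 1 - (N - k) * 3),
        L j1 * L' (j2 + (N - k) - 1)
      = (∑ j1 ∈ Icc (0:ℤ) (N - 1 - (N - k) * 3), ∑ j2 ∈ Icc j1 (N - 1 - (N - k) * 3),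
          L j1 * L' (j2 + (N - k)))
        + ∑ j ∈ Icc (0:ℤ) (N - 1 - (N - k) * 3), L j * L' (j - 1 + (N - k)) := by
  set U := N - 1 - (N - k) * 3 with hU
  have h1 : L' (U + (N - k)) = 0 := by by_contra h; have := hL' _ h; omega
  rw [← Finset.sum_add_distrib]
  refine Finset.sum_congr rfl (fun j1 hj1 => ?_)
  simp only [Finset.mem_Icc] at hj1
  calc ∑ j2 ∈ Icc j1 U, L j1 * L' (j2 + (N - k) - 1)
      = ∑ j2 ∈ Icc j1 U, (fun x => L j1 * L' (x + (N - k))) (j2 - 1) := by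
        refine Finset.sum_congr rfl (fun j2 _ => ?_)
        show _ = L j1 * L' (j2 - 1 + (N - k))
        rw [show j2 - 1 + (N - k) = j2 + (N - k) - 1 by ring]
    _ = ∑ j2 ∈ Icc (j1 - 1) (U - 1), L j1 * L' (j2 + (N - k)) := by
        rw [sum_shift_sub j1 U 1 (fun x => L j1 * L' (x + (N - k)))]
    _ = L j1 * L' (j1 - 1 + (N - k)) + ∑ j2 ∈ Icc j1 (U - 1), L j1 * L' (j2 + (N - k)) := by
        rw [sum_split_bot (show j1 - 1 ≤ U - 1 by omega) (fun x => L j1 * L' (x + (N - k))),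
          show j1 - 1 + 1 = j1 by ring]
    _ = ∑ j2 ∈ Icc j1 U, L j1 * L' (j2 + (N - k)) + L j1 * L' (j1 - 1 + (N - k)) := by
        rw [sum_extend_top (fun x => L j1 * L' (x + (N - k))) j1 U
          (fun _ => by show L j1 * L' (U + (N - k)) = 0; rw [h1, mul_zero])]
        ring

lemma idX34 (k N : ℤ) (L L' : ℤ → ℚ)
    (hL' : ∀ m : ℤ, L' m ≠ 0 → 0 ≤ m ∧ m ≤ 2 * k - N - 2) :
    ∑ j1 ∈ Icc (0:ℤ) (N - 1 - (N - k) * 3), ∑ j2 ∈ Icc j1 (N - 1 - (N - k) * 3),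
        L j1 * L' (j2 + (N - k))
      = (∑ j1 ∈ Icc (0:ℤ) (N - 1 - (N - k) * 3 - 2),
          ∑ j2 ∈ Icc j1 (N - 1 - (N - k) * 3 - 2), L j1 * L' (j2 + (N - k + 1)))
        + ∑ j ∈ Icc (0:ℤ) (N - 1 - (N - k) * 3), L j * L' (j + (N - k)) := by
  set U := N - 1 - (N - k) * 3 with hU
  have h1 : L' (U + 1 + (N - k)) = 0 := by by_contra h; have := hL' _ h; omega
  have step1 : ∑ j1 ∈ Icc (0:ℤ) U, ∑ j2 ∈ Icc j1 U, L j1 * L' (j2 + (N - k))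
      = (∑ j1 ∈ Icc (0:ℤ) U, ∑ j2 ∈ Icc j1 U, L j1 * L' (j2 + (N - k + 1)))
        + ∑ j ∈ Icc (0:ℤ) U, L j * L' (j + (N - k)) := by
    rw [← Finset.sum_add_distrib]
    refine Finset.sum_congr rfl (fun j1 hj1 => ?_)
    simp only [Finset.mem_Icc] at hj1
    calc ∑ j2 ∈ Icc j1 U, L j1 * L' (j2 + (N - k))
        = L j1 * L' (j1 + (N - k)) + ∑ j2 ∈ Icc (j1 + 1) U, L j1 * L' (j2 + (N - k)) := by
          rw [sum_split_bot (show j1 ≤ U by omega) (fun x => L j1 * L' (x + (N - k)))]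
      _ = L j1 * L' (j1 + (N - k)) + ∑ j2 ∈ Icc j1 U, L j1 * L' (j2 + (N - k + 1)) := by
          congr 1
          symm
          calc ∑ j2 ∈ Icc j1 U, L j1 * L' (j2 + (N - k + 1))
              = ∑ j2 ∈ Icc j1 U, (fun x => L j1 * L' (x + (N - k))) (j2 + 1) := by
                refine Finset.sum_congr rfl (fun j2 _ => ?_)
                show _ = L j1 * L' (j2 + 1 + (N - k))
                rw [show j2 + 1 + (N - k) = j2 + (N - k + 1) by ring]
            _ = ∑ j2 ∈ Icc (j1 + 1) (U + 1), L j1 * L' (j2 + (N - k)) := by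
                rw [sum_shift_add j1 U 1 (fun x => L j1 * L' (x + (N - k)))]
            _ = ∑ j2 ∈ Icc (j1 + 1) U, L j1 * L' (j2 + (N - k)) := by
                rw [sum_extend_top (fun x => L j1 * L' (x + (N - k))) (j1 + 1) (U + 1)
                  (fun _ => by show L j1 * L' (U + 1 + (N - k)) = 0; rw [h1, mul_zero]),
                  show U + 1 - 1 = U by ring]
      _ = ∑ j2 ∈ Icc j1 U, L j1 * L' (j2 + (N - k + 1)) + L j1 * L' (j1 + (N - k)) := by ring
  rw [step1]
  congr 1
  apply trunc_double
  intro j1 j2 hj2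
  have : L' (j2 + (N - k + 1)) = 0 := by by_contra h; have := hL' _ h; omega
  rw [this, mul_zero]

lemma idY1 (k N : ℤ) (L L' : ℤ → ℚ)
    (hL : ∀ m : ℤ, L m ≠ 0 → 0 ≤ m ∧ m ≤ k - 1)
    (hL' : ∀ m : ℤ, L' m ≠ 0 → 0 ≤ m ∧ m ≤ 2 * k - N - 2) :
    ∑ j ∈ Icc (0:ℤ) (N - 1 - (N - k) * 3), L' (j - 1) * L (j + 2 * (N - k))
      = ∑ j ∈ Icc (0:ℤ) (N - 1 - (N - k) * 3), L' j * L (j + 1 + 2 * (N - k)) := by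
  set U := N - 1 - (N - k) * 3 with hU
  have h1 : L (U + 1 + 2 * (N - k)) = 0 := by by_contra h; have := hL _ h; omega
  have h2 : L' (-1) = 0 := by by_contra h; have := hL' _ h; omega
  calc ∑ j ∈ Icc (0:ℤ) U, L' (j - 1) * L (j + 2 * (N - k))
      = ∑ j ∈ Icc (0:ℤ) U, (fun x => L' x * L (x + 1 + 2 * (N - k))) (j - 1) := by
        refine Finset.sum_congr rfl (fun j _ => ?_)
        show _ = L' (j - 1) * L (j - 1 + 1 + 2 * (N - k))
        rw [show j - 1 + 1 + 2 * (N - k) = j + 2 * (N - k) by ring]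
    _ = ∑ j ∈ Icc (0 - 1 : ℤ) (U - 1), L' j * L (j + 1 + 2 * (N - k)) := by
        rw [sum_shift_sub 0 U 1 (fun x => L' x * L (x + 1 + 2 * (N - k)))]
    _ = ∑ j ∈ Icc (0:ℤ) (U - 1), L' j * L (j + 1 + 2 * (N - k)) := by
        rw [show (0:ℤ) - 1 = -1 by norm_num,
          sum_extend_bot (fun x => L' x * L (x + 1 + 2 * (N - k))) (-1) (U - 1)
            (fun _ => by show L' (-1) * L (-1 + 1 + 2 * (N - k)) = 0; rw [h2, zero_mul]),
          show (-1:ℤ) + 1 = 0 by norm_num]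
    _ = ∑ j ∈ Icc (0:ℤ) U, L' j * L (j + 1 + 2 * (N - k)) := by
        rw [sum_extend_top (fun x => L' x * L (x + 1 + 2 * (N - k))) 0 U
          (fun _ => by show L' U * L (U + 1 + 2 * (N - k)) = 0; rw [h1, mul_zero])]

lemma idY2 (k N : ℤ) (L L' : ℤ → ℚ)
    (hL' : ∀ m : ℤ, L' m ≠ 0 → 0 ≤ m ∧ m ≤ 2 * k - N - 2) :
    ∑ j1 ∈ Icc (0:ℤ) (N - 1 - (N - k) * 3), ∑ j2 ∈ Icc j1 (N - 1 - (N - k) * 3),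
        L' j1 * L (j2 + 2 * (N - k))
      = (∑ j ∈ Icc (0:ℤ) (N - 1 - (N - k) * 3), L' j * L (j + 2 * (N - k)))
        + ∑ j1 ∈ Icc (0:ℤ) (N - 1 - (N - k) * 3), ∑ j2 ∈ Icc j1 (N - 1 - (N - k) * 3),
            L' (j1 - 1) * L (j2 + 2 * (N - k)) := by
  set U := N - 1 - (N - k) * 3 with hU
  have h2 : L' (-1) = 0 := by by_contra h; have := hL' _ h; omega
  have key : ∑ j1 ∈ Icc (0:ℤ) U, ∑ j2 ∈ Icc j1 U, L' (j1 - 1) * L (j2 + 2 * (N - k))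
      = ∑ j1 ∈ Icc (0:ℤ) U, ∑ j2 ∈ Icc (j1 + 1) U, L' j1 * L (j2 + 2 * (N - k)) := by
    calc ∑ j1 ∈ Icc (0:ℤ) U, ∑ j2 ∈ Icc j1 U, L' (j1 - 1) * L (j2 + 2 * (N - k))
        = ∑ j1 ∈ Icc (0:ℤ) U,
            (fun x => ∑ j2 ∈ Icc (x + 1) U, L' x * L (j2 + 2 * (N - k))) (j1 - 1) := by
          refine Finset.sum_congr rfl (fun j1 _ => ?_)
          show _ = ∑ j2 ∈ Icc (j1 - 1 + 1) U, L' (j1 - 1) * L (j2 + 2 * (N - k))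
          rw [show j1 - 1 + 1 = j1 by ring]
      _ = ∑ j1 ∈ Icc (0 - 1 : ℤ) (U - 1), ∑ j2 ∈ Icc (j1 + 1) U, L' j1 * L (j2 + 2 * (N - k)) := by
          rw [sum_shift_sub 0 U 1 (fun x => ∑ j2 ∈ Icc (x + 1) U, L' x * L (j2 + 2 * (N - k)))]
      _ = ∑ j1 ∈ Icc (0:ℤ) (U - 1), ∑ j2 ∈ Icc (j1 + 1) U, L' j1 * L (j2 + 2 * (N - k)) := by
          rw [show (0:ℤ) - 1 = -1 by norm_num,
            sum_extend_bot (fun x => ∑ j2 ∈ Icc (x + 1) U, L' x * L (j2 + 2 * (N - k))) (-1) (U - 1)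
              (fun _ => by
                show ∑ j2 ∈ Icc (-1 + 1 : ℤ) U, L' (-1) * L (j2 + 2 * (N - k)) = 0
                exact Finset.sum_eq_zero (fun j2 _ => by rw [h2, zero_mul])),
            show (-1:ℤ) + 1 = 0 by norm_num]
      _ = ∑ j1 ∈ Icc (0:ℤ) U, ∑ j2 ∈ Icc (j1 + 1) U, L' j1 * L (j2 + 2 * (N - k)) := by
          rw [sum_extend_top (fun x => ∑ j2 ∈ Icc (x + 1) U, L' x * L (j2 + 2 * (N - k))) 0 U
            (fun _ => by
              show ∑ j2 ∈ Icc (U + 1 : ℤ) U, L' U * L (j2 + 2 * (N - k)) = 0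
              rw [Icc_eq_empty (by omega), Finset.sum_empty])]
  rw [key, ← Finset.sum_add_distrib]
  refine Finset.sum_congr rfl (fun j1 hj1 => ?_)
  simp only [Finset.mem_Icc] at hj1
  rw [sum_split_bot (show j1 ≤ U by omega) (fun x => L' j1 * L (x + 2 * (N - k)))]

lemma idY34 (k N : ℤ) (L L' : ℤ → ℚ)
    (hL : ∀ m : ℤ, L m ≠ 0 → 0 ≤ m ∧ m ≤ k - 1) :
    ∑ j1 ∈ Icc (0:ℤ) (N - 1 - (N - k) * 3), ∑ j2 ∈ Icc j1 (N - 1 - (N - k) * 3),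
        L' j1 * L (j2 + 2 * (N - k))
      = (∑ j ∈ Icc (0:ℤ) (N - 1 - (N - k) * 3), L' j * L (j + 2 * (N - k)))
        + (∑ j ∈ Icc (0:ℤ) (N - 1 - (N - k) * 3), L' j * L (j + 1 + 2 * (N - k)))
        + ∑ j1 ∈ Icc (0:ℤ) (N - 1 - (N - k) * 3 - 2),
            ∑ j2 ∈ Icc j1 (N - 1 - (N - k) * 3 - 2), L' j1 * L (j2 + 2 * (N - k + 1)) := by
  set U := N - 1 - (N - k) * 3 with hU
  have h1 : L (U + 1 + 2 * (N - k)) = 0 := by by_contra h; have := hL _ h; omega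
  have h2 : L (U + 1 + 1 + 2 * (N - k)) = 0 := by by_contra h; have := hL _ h; omega
  have step1 : ∑ j1 ∈ Icc (0:ℤ) U, ∑ j2 ∈ Icc j1 U, L' j1 * L (j2 + 2 * (N - k))
      = (∑ j ∈ Icc (0:ℤ) U, L' j * L (j + 2 * (N - k)))
        + ((∑ j ∈ Icc (0:ℤ) U, L' j * L (j + 1 + 2 * (N - k)))
          + ∑ j1 ∈ Icc (0:ℤ) U, ∑ j2 ∈ Icc j1 U, L' j1 * L (j2 + 2 * (N - k + 1))) := by
    rw [← Finset.sum_add_distrib, ← Finset.sum_add_distrib]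
    refine Finset.sum_congr rfl (fun j1 hj1 => ?_)
    simp only [Finset.mem_Icc] at hj1
    have stepa : ∑ j2 ∈ Icc j1 U, L' j1 * L (j2 + 1 + 2 * (N - k))
        = ∑ j2 ∈ Icc (j1 + 1) U, L' j1 * L (j2 + 2 * (N - k)) := by
      calc ∑ j2 ∈ Icc j1 U, L' j1 * L (j2 + 1 + 2 * (N - k))
          = ∑ j2 ∈ Icc j1 U, (fun x => L' j1 * L (x + 2 * (N - k))) (j2 + 1) := rfl
        _ = ∑ j2 ∈ Icc (j1 + 1) (U + 1), L' j1 * L (j2 + 2 * (N - k)) := by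
            rw [sum_shift_add j1 U 1 (fun x => L' j1 * L (x + 2 * (N - k)))]
        _ = ∑ j2 ∈ Icc (j1 + 1) U, L' j1 * L (j2 + 2 * (N - k)) := by
            rw [sum_extend_top (fun x => L' j1 * L (x + 2 * (N - k))) (j1 + 1) (U + 1)
              (fun _ => by show L' j1 * L (U + 1 + 2 * (N - k)) = 0; rw [h1, mul_zero]),
              show U + 1 - 1 = U by ring]
    have stepb : ∑ j2 ∈ Icc j1 U, L' j1 * L (j2 + 2 * (N - k + 1))
        = ∑ j2 ∈ Icc (j1 + 1) U, L' j1 * L (j2 + 1 + 2 * (N - k)) := by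
      calc ∑ j2 ∈ Icc j1 U, L' j1 * L (j2 + 2 * (N - k + 1))
          = ∑ j2 ∈ Icc j1 U, (fun x => L' j1 * L (x + 1 + 2 * (N - k))) (j2 + 1) := by
            refine Finset.sum_congr rfl (fun j2 _ => ?_)
            show _ = L' j1 * L (j2 + 1 + 1 + 2 * (N - k))
            rw [show j2 + 1 + 1 + 2 * (N - k) = j2 + 2 * (N - k + 1) by ring]
        _ = ∑ j2 ∈ Icc (j1 + 1) (U + 1), L' j1 * L (j2 + 1 + 2 * (N - k)) := by
            rw [sum_shift_add j1 U 1 (fun x => L' j1 * L (x + 1 + 2 * (N - k)))]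
        _ = ∑ j2 ∈ Icc (j1 + 1) U, L' j1 * L (j2 + 1 + 2 * (N - k)) := by
            rw [sum_extend_top (fun x => L' j1 * L (x + 1 + 2 * (N - k))) (j1 + 1) (U + 1)
              (fun _ => by show L' j1 * L (U + 1 + 1 + 2 * (N - k)) = 0; rw [h2, mul_zero]),
              show U + 1 - 1 = U by ring]
    calc ∑ j2 ∈ Icc j1 U, L' j1 * L (j2 + 2 * (N - k))
        = L' j1 * L (j1 + 2 * (N - k)) + ∑ j2 ∈ Icc (j1 + 1) U, L' j1 * L (j2 + 2 * (N - k)) := by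
          rw [sum_split_bot (show j1 ≤ U by omega) (fun x => L' j1 * L (x + 2 * (N - k)))]
      _ = L' j1 * L (j1 + 2 * (N - k)) + ∑ j2 ∈ Icc j1 U, L' j1 * L (j2 + 1 + 2 * (N - k)) := by
          rw [stepa]
      _ = L' j1 * L (j1 + 2 * (N - k)) + (L' j1 * L (j1 + 1 + 2 * (N - k))
            + ∑ j2 ∈ Icc (j1 + 1) U, L' j1 * L (j2 + 1 + 2 * (N - k))) := by
          rw [sum_split_bot (show j1 ≤ U by omega) (fun x => L' j1 * L (x + 1 + 2 * (N - k)))]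
      _ = L' j1 * L (j1 + 2 * (N - k)) + (L' j1 * L (j1 + 1 + 2 * (N - k))
            + ∑ j2 ∈ Icc j1 U, L' j1 * L (j2 + 2 * (N - k + 1))) := by rw [stepb]
  rw [step1]
  rw [show ∀ a b c : ℚ, a + (b + c) = a + b + c from fun a b c => (add_assoc a b c).symm]
  congr 1
  apply trunc_double
  intro j1 j2 hj2
  have : L (j2 + 2 * (N - k + 1)) = 0 := by by_contra h; have := hL _ h; omega
  rw [this, mul_zero]

lemma idZ (k N : ℤ) (L : ℤ → ℚ) :
    (∑ j1 ∈ Icc (0:ℤ) (N - 1 - (N - k) * 3), ∑ j2 ∈ Icc j1 (N - 1 - (N - k) * 3),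
        ∑ j3 ∈ Icc j2 (N - 1 - (N - k) * 3),
        L j1 * L (j2 + (N - k)) * L (j3 + 2 * (N - k)))
      + ∑ j ∈ Icc (0:ℤ) (N - 1 - (N - k) * 3),
          L j * L (j + (N - k)) * L (j + 2 * (N - k))
    = (∑ j1 ∈ Icc (0:ℤ) (N - 1 - (N - k) * 3), ∑ j2 ∈ Icc j1 (N - 1 - (N - k) * 3),
        L j1 * L (j2 + (N - k)) * L (j2 + 2 * (N - k)))
      + (∑ j1 ∈ Icc (0:ℤ) (N - 1 - (N - k) * 3), ∑ j2 ∈ Icc j1 (N - 1 - (N - k) * 3),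
        L j1 * L (j1 + (N - k)) * L (j2 + 2 * (N - k)))
      + ∑ j1 ∈ Icc (0:ℤ) (N - 1 - (N - k) * 3 - 2),
          ∑ j2 ∈ Icc j1 (N - 1 - (N - k) * 3 - 2),
          ∑ j3 ∈ Icc j2 (N - 1 - (N - k) * 3 - 2),
          L j1 * L (j2 + (N - k + 1)) * L (j3 + 2 * (N - k + 1)) := by
  set U := N - 1 - (N - k) * 3 with hU
  -- Step A : C = Cdbl1 + Cstrict3
  have stepA : ∑ j1 ∈ Icc (0:ℤ) U, ∑ j2 ∈ Icc j1 U, ∑ j3 ∈ Icc j2 U,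
        L j1 * L (j2 + (N - k)) * L (j3 + 2 * (N - k))
      = (∑ j1 ∈ Icc (0:ℤ) U, ∑ j2 ∈ Icc j1 U,
          L j1 * L (j2 + (N - k)) * L (j2 + 2 * (N - k)))
        + ∑ j1 ∈ Icc (0:ℤ) U, ∑ j2 ∈ Icc j1 U, ∑ j3 ∈ Icc (j2 + 1) U,
            L j1 * L (j2 + (N - k)) * L (j3 + 2 * (N - k)) := by
    rw [← Finset.sum_add_distrib]
    refine Finset.sum_congr rfl (fun j1 hj1 => ?_)
    rw [← Finset.sum_add_distrib]
    refine Finset.sum_congr rfl (fun j2 hj2 => ?_)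
    simp only [Finset.mem_Icc] at hj2
    rw [sum_split_bot (show j2 ≤ U by omega)
      (fun x => L j1 * L (j2 + (N - k)) * L (x + 2 * (N - k)))]
  -- Step B : Cstrict3 = W + Cstrict
  have stepB : ∑ j1 ∈ Icc (0:ℤ) U, ∑ j2 ∈ Icc j1 U, ∑ j3 ∈ Icc (j2 + 1) U,
        L j1 * L (j2 + (N - k)) * L (j3 + 2 * (N - k))
      = (∑ j1 ∈ Icc (0:ℤ) U, ∑ j3 ∈ Icc (j1 + 1) U,
          L j1 * L (j1 + (N - k)) * L (j3 + 2 * (N - k)))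
        + ∑ j1 ∈ Icc (0:ℤ) U, ∑ j2 ∈ Icc (j1 + 1) U, ∑ j3 ∈ Icc (j2 + 1) U,
            L j1 * L (j2 + (N - k)) * L (j3 + 2 * (N - k)) := by
    rw [← Finset.sum_add_distrib]
    refine Finset.sum_congr rfl (fun j1 hj1 => ?_)
    simp only [Finset.mem_Icc] at hj1
    rw [sum_split_bot (show j1 ≤ U by omega)
      (fun x => ∑ j3 ∈ Icc (x + 1) U, L j1 * L (x + (N - k)) * L (j3 + 2 * (N - k)))]
  -- Step C : Cdbl2 = Sd + W
  have stepC : ∑ j1 ∈ Icc (0:ℤ) U, ∑ j2 ∈ Icc j1 U,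
        L j1 * L (j1 + (N - k)) * L (j2 + 2 * (N - k))
      = (∑ j ∈ Icc (0:ℤ) U, L j * L (j + (N - k)) * L (j + 2 * (N - k)))
        + ∑ j1 ∈ Icc (0:ℤ) U, ∑ j3 ∈ Icc (j1 + 1) U,
            L j1 * L (j1 + (N - k)) * L (j3 + 2 * (N - k)) := by
    rw [← Finset.sum_add_distrib]
    refine Finset.sum_congr rfl (fun j1 hj1 => ?_)
    simp only [Finset.mem_Icc] at hj1
    rw [sum_split_bot (show j1 ≤ U by omega)
      (fun x => L j1 * L (j1 + (N - k)) * L (x + 2 * (N - k)))]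
  -- Step D : Cstrict = C''
  have stepD : ∑ j1 ∈ Icc (0:ℤ) (U - 2), ∑ j2 ∈ Icc j1 (U - 2), ∑ j3 ∈ Icc j2 (U - 2),
        L j1 * L (j2 + (N - k + 1)) * L (j3 + 2 * (N - k + 1))
      = ∑ j1 ∈ Icc (0:ℤ) U, ∑ j2 ∈ Icc (j1 + 1) U, ∑ j3 ∈ Icc (j2 + 1) U,
          L j1 * L (j2 + (N - k)) * L (j3 + 2 * (N - k)) := by
    -- innermost shift, per j1 j2
    have d1 : ∀ j1 j2 : ℤ, ∑ j3 ∈ Icc j2 (U - 2),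
          L j1 * L (j2 + (N - k + 1)) * L (j3 + 2 * (N - k + 1))
        = ∑ j3 ∈ Icc (j2 + 2) U, L j1 * L (j2 + (N - k + 1)) * L (j3 + 2 * (N - k)) := by
      intro j1 j2
      calc ∑ j3 ∈ Icc j2 (U - 2), L j1 * L (j2 + (N - k + 1)) * L (j3 + 2 * (N - k + 1))
          = ∑ j3 ∈ Icc j2 (U - 2),
              (fun x => L j1 * L (j2 + (N - k + 1)) * L (x + 2 * (N - k))) (j3 + 2) := by
            refine Finset.sum_congr rfl (fun j3 _ => ?_)
            show _ = L j1 * L (j2 + (N - k + 1)) * L (j3 + 2 + 2 * (N - k))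
            rw [show j3 + 2 + 2 * (N - k) = j3 + 2 * (N - k + 1) by ring]
        _ = ∑ j3 ∈ Icc (j2 + 2) (U - 2 + 2),
              L j1 * L (j2 + (N - k + 1)) * L (j3 + 2 * (N - k)) := by
            rw [sum_shift_add j2 (U - 2) 2
              (fun x => L j1 * L (j2 + (N - k + 1)) * L (x + 2 * (N - k)))]
        _ = ∑ j3 ∈ Icc (j2 + 2) U, L j1 * L (j2 + (N - k + 1)) * L (j3 + 2 * (N - k)) := by
            rw [show U - 2 + 2 = U by ring]
    -- middle shift, per j1
    have d2 : ∀ j1 : ℤ, ∑ j2 ∈ Icc j1 (U - 2), ∑ j3 ∈ Icc (j2 + 2) U,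
          L j1 * L (j2 + (N - k + 1)) * L (j3 + 2 * (N - k))
        = ∑ j2 ∈ Icc (j1 + 1) (U - 1), ∑ j3 ∈ Icc (j2 + 1) U,
            L j1 * L (j2 + (N - k)) * L (j3 + 2 * (N - k)) := by
      intro j1
      calc ∑ j2 ∈ Icc j1 (U - 2), ∑ j3 ∈ Icc (j2 + 2) U,
            L j1 * L (j2 + (N - k + 1)) * L (j3 + 2 * (N - k))
          = ∑ j2 ∈ Icc j1 (U - 2),
              (fun x => ∑ j3 ∈ Icc (x + 1) U,
                L j1 * L (x + (N - k)) * L (j3 + 2 * (N - k))) (j2 + 1) := by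
            refine Finset.sum_congr rfl (fun j2 _ => ?_)
            show _ = ∑ j3 ∈ Icc (j2 + 1 + 1) U,
                L j1 * L (j2 + 1 + (N - k)) * L (j3 + 2 * (N - k))
            rw [show j2 + 1 + 1 = j2 + 2 by ring,
              show j2 + 1 + (N - k) = j2 + (N - k + 1) by ring]
        _ = ∑ j2 ∈ Icc (j1 + 1) (U - 2 + 1), ∑ j3 ∈ Icc (j2 + 1) U,
              L j1 * L (j2 + (N - k)) * L (j3 + 2 * (N - k)) := by
            rw [sum_shift_add j1 (U - 2) 1
              (fun x => ∑ j3 ∈ Icc (x + 1) U, L j1 * L (x + (N - k)) * L (j3 + 2 * (N - k)))]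
        _ = ∑ j2 ∈ Icc (j1 + 1) (U - 1), ∑ j3 ∈ Icc (j2 + 1) U,
              L j1 * L (j2 + (N - k)) * L (j3 + 2 * (N - k)) := by
            rw [show U - 2 + 1 = U - 1 by ring]
    calc ∑ j1 ∈ Icc (0:ℤ) (U - 2), ∑ j2 ∈ Icc j1 (U - 2), ∑ j3 ∈ Icc j2 (U - 2),
          L j1 * L (j2 + (N - k + 1)) * L (j3 + 2 * (N - k + 1))
        = ∑ j1 ∈ Icc (0:ℤ) (U - 2), ∑ j2 ∈ Icc (j1 + 1) (U - 1), ∑ j3 ∈ Icc (j2 + 1) U,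
            L j1 * L (j2 + (N - k)) * L (j3 + 2 * (N - k)) := by
          refine Finset.sum_congr rfl (fun j1 _ => ?_)
          rw [Finset.sum_congr rfl (fun j2 _ => d1 j1 j2), d2 j1]
      _ = ∑ j1 ∈ Icc (0:ℤ) U, ∑ j2 ∈ Icc (j1 + 1) (U - 1), ∑ j3 ∈ Icc (j2 + 1) U,
            L j1 * L (j2 + (N - k)) * L (j3 + 2 * (N - k)) := by
          apply Finset.sum_subset (Finset.Icc_subset_Icc le_rfl (show U - 2 ≤ U by omega))
          intro x hx hnx
          simp only [Finset.mem_Icc] at hx hnx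
          rw [Icc_eq_empty (show ¬ x + 1 ≤ U - 1 by omega), Finset.sum_empty]
      _ = ∑ j1 ∈ Icc (0:ℤ) U, ∑ j2 ∈ Icc (j1 + 1) U, ∑ j3 ∈ Icc (j2 + 1) U,
            L j1 * L (j2 + (N - k)) * L (j3 + 2 * (N - k)) := by
          refine Finset.sum_congr rfl (fun j1 _ => ?_)
          symm
          rw [sum_extend_top (fun x => ∑ j3 ∈ Icc (x + 1) U,
              L j1 * L (x + (N - k)) * L (j3 + 2 * (N - k))) (j1 + 1) U
            (fun _ => by
              show ∑ j3 ∈ Icc (U + 1 : ℤ) U,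
                  L j1 * L (U + (N - k)) * L (j3 + 2 * (N - k)) = 0
              rw [Icc_eq_empty (by omega), Finset.sum_empty])]
  rw [stepA, stepB, stepC, stepD]
  ring

/-- Degree-3 case of `γ_0^{N,k,d} = γ_0^{N+1,k,d}` for the Fano recursions of Theorem 1:
with `L` the line constants, `L'`, `M` the conic and cubic constants in dimension one
more, and `L''`, `L'''` given by the degree-2 and degree-3 recursions, one has
`γ^{N,k,3}_0` computed from `(L, L'', L''')` `= γ^{N+1,k,3}_0` computed from `(L, L', M)`. -/
theorem gamma0_deg3_invariant (k N : ℤ) (hk : 2 ≤ k) (hNk : 2 ≤ N - k)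
    (L L' M : ℤ → ℚ)
    (hL : ∀ m : ℤ, L m ≠ 0 → 0 ≤ m ∧ m ≤ k - 1)
    (hL' : ∀ m : ℤ, L' m ≠ 0 → 0 ≤ m ∧ m ≤ 2 * k - N - 2)
    (hM : ∀ m : ℤ, M m ≠ 0 → 0 ≤ m ∧ m ≤ 3 * k - 2 * N - 3)
    (L'' : ℤ → ℚ)
    (hL'' : ∀ m : ℤ, L'' m = (1/2) * (L' (m - 1) + L' m + 2 * L m * L (m + (N - k))))
    (L''' : ℤ → ℚ)
    (hL''' : ∀ m : ℤ, L''' m = (1/18) *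
      (4 * M (m - 2) + 10 * M (m - 1) + 4 * M m
        + 12 * L' (m - 1) * L (m + 2 * (N - k))
        + 9 * L' m * L (m + 2 * (N - k))
        + 6 * L' m * L (m + 1 + 2 * (N - k))
        + 6 * L (m - 1) * L' (m - 1 + (N - k))
        + 9 * L m * L' (m - 1 + (N - k))
        + 12 * L m * L' (m + (N - k))
        + 18 * L m * L (m + (N - k)) * L (m + 2 * (N - k)))) :
    gammaCoeff N k
        (fun d => if d = 1 then L else if d = 2 then L'' else if d = 3 then L''' else fun _ => 0)
        3 0
      = gammaCoeff (N + 1) k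
        (fun d => if d = 1 then L else if d = 2 then L' else if d = 3 then M else fun _ => 0)
        3 0 := by
  rw [gamma_explicit N k, gamma_explicit (N + 1) k]
  simp only [show N + 1 - k = N - k + 1 by ring,
    show N + 1 - 1 - (N - k + 1) * 3 = N - 1 - (N - k) * 3 - 2 by ring]
  norm_num
  have hA : ∑ j ∈ Finset.Icc (0:ℤ) (N - 1 - (N - k) * 3), L''' j
      = (2/9) * (∑ j ∈ Finset.Icc (0:ℤ) (N - 1 - (N - k) * 3), M (j - 2))
        + (5/9) * (∑ j ∈ Finset.Icc (0:ℤ) (N - 1 - (N - k) * 3), M (j - 1))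
        + (2/9) * (∑ j ∈ Finset.Icc (0:ℤ) (N - 1 - (N - k) * 3), M j)
        + (2/3) * (∑ j ∈ Finset.Icc (0:ℤ) (N - 1 - (N - k) * 3), L' (j - 1) * L (j + 2 * (N - k)))
        + (1/2) * (∑ j ∈ Finset.Icc (0:ℤ) (N - 1 - (N - k) * 3), L' j * L (j + 2 * (N - k)))
        + (1/3) * (∑ j ∈ Finset.Icc (0:ℤ) (N - 1 - (N - k) * 3), L' j * L (j + 1 + 2 * (N - k)))
        + (1/3) * (∑ j ∈ Finset.Icc (0:ℤ) (N - 1 - (N - k) * 3), L (j - 1) * L' (j - 1 + (N - k)))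
        + (1/2) * (∑ j ∈ Finset.Icc (0:ℤ) (N - 1 - (N - k) * 3), L j * L' (j - 1 + (N - k)))
        + (2/3) * (∑ j ∈ Finset.Icc (0:ℤ) (N - 1 - (N - k) * 3), L j * L' (j + (N - k)))
        + ∑ j ∈ Finset.Icc (0:ℤ) (N - 1 - (N - k) * 3),
            L j * L (j + (N - k)) * L (j + 2 * (N - k)) := by
    calc ∑ j ∈ Finset.Icc (0:ℤ) (N - 1 - (N - k) * 3), L''' j
        = ∑ j ∈ Finset.Icc (0:ℤ) (N - 1 - (N - k) * 3),
            ((2/9) * M (j - 2) + (5/9) * M (j - 1) + (2/9) * M j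
              + (2/3) * (L' (j - 1) * L (j + 2 * (N - k)))
              + (1/2) * (L' j * L (j + 2 * (N - k)))
              + (1/3) * (L' j * L (j + 1 + 2 * (N - k)))
              + (1/3) * (L (j - 1) * L' (j - 1 + (N - k)))
              + (1/2) * (L j * L' (j - 1 + (N - k)))
              + (2/3) * (L j * L' (j + (N - k)))
              + L j * L (j + (N - k)) * L (j + 2 * (N - k))) :=
          Finset.sum_congr rfl (fun j _ => by rw [hL''' j]; ring)
      _ = _ := by
          simp only [Finset.sum_add_distrib]
          rw [sum_const_mul, sum_const_mul, sum_const_mul, sum_const_mul, sum_const_mul,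
            sum_const_mul, sum_const_mul, sum_const_mul, sum_const_mul]
  have hB : ∑ j1 ∈ Finset.Icc (0:ℤ) (N - 1 - (N - k) * 3),
        ∑ j2 ∈ Finset.Icc j1 (N - 1 - (N - k) * 3),
        (L j1 * L'' (j2 + (N - k)) + L'' j1 * L (j2 + 2 * (N - k)))
      = (1/2) * (∑ j1 ∈ Finset.Icc (0:ℤ) (N - 1 - (N - k) * 3),
            ∑ j2 ∈ Finset.Icc j1 (N - 1 - (N - k) * 3), L j1 * L' (j2 + (N - k) - 1))
        + (1/2) * (∑ j1 ∈ Finset.Icc (0:ℤ) (N - 1 - (N - k) * 3),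
            ∑ j2 ∈ Finset.Icc j1 (N - 1 - (N - k) * 3), L j1 * L' (j2 + (N - k)))
        + (1/2) * (∑ j1 ∈ Finset.Icc (0:ℤ) (N - 1 - (N - k) * 3),
            ∑ j2 ∈ Finset.Icc j1 (N - 1 - (N - k) * 3), L' (j1 - 1) * L (j2 + 2 * (N - k)))
        + (1/2) * (∑ j1 ∈ Finset.Icc (0:ℤ) (N - 1 - (N - k) * 3),
            ∑ j2 ∈ Finset.Icc j1 (N - 1 - (N - k) * 3), L' j1 * L (j2 + 2 * (N - k)))
        + (∑ j1 ∈ Finset.Icc (0:ℤ) (N - 1 - (N - k) * 3),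
            ∑ j2 ∈ Finset.Icc j1 (N - 1 - (N - k) * 3),
            L j1 * L (j2 + (N - k)) * L (j2 + 2 * (N - k)))
        + ∑ j1 ∈ Finset.Icc (0:ℤ) (N - 1 - (N - k) * 3),
            ∑ j2 ∈ Finset.Icc j1 (N - 1 - (N - k) * 3),
            L j1 * L (j1 + (N - k)) * L (j2 + 2 * (N - k)) := by
    calc ∑ j1 ∈ Finset.Icc (0:ℤ) (N - 1 - (N - k) * 3),
          ∑ j2 ∈ Finset.Icc j1 (N - 1 - (N - k) * 3),
          (L j1 * L'' (j2 + (N - k)) + L'' j1 * L (j2 + 2 * (N - k)))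
        = ∑ j1 ∈ Finset.Icc (0:ℤ) (N - 1 - (N - k) * 3),
            ∑ j2 ∈ Finset.Icc j1 (N - 1 - (N - k) * 3),
            ((1/2) * (L j1 * L' (j2 + (N - k) - 1)) + (1/2) * (L j1 * L' (j2 + (N - k)))
              + (1/2) * (L' (j1 - 1) * L (j2 + 2 * (N - k)))
              + (1/2) * (L' j1 * L (j2 + 2 * (N - k)))
              + L j1 * L (j2 + (N - k)) * L (j2 + 2 * (N - k))
              + L j1 * L (j1 + (N - k)) * L (j2 + 2 * (N - k))) :=
          Finset.sum_congr rfl (fun j1 _ => Finset.sum_congr rfl (fun j2 _ => by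
            rw [hL'' (j2 + (N - k)), hL'' j1,
              show j2 + (N - k) + (N - k) = j2 + 2 * (N - k) by ring]
            ring))
      _ = _ := by
          simp only [Finset.sum_add_distrib]
          rw [sum_sum_const_mul, sum_sum_const_mul, sum_sum_const_mul, sum_sum_const_mul]
  rw [hA, hB]
  simp only [Finset.sum_add_distrib]
  linarith [idM_shift M (N - 1 - (N - k) * 3) 2 (3 * k - 2 * N - 3) hM (by omega) (by norm_num)
      (by norm_num),
    idM_shift M (N - 1 - (N - k) * 3) 1 (3 * k - 2 * N - 3) hM (by omega) (by norm_num)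
      (by norm_num),
    idM0 M (N - 1 - (N - k) * 3) (3 * k - 2 * N - 3) hM (by omega),
    idX1 k N L L' hL hL', idX2 k N L L' hL', idX34 k N L L' hL',
    idY1 k N L L' hL hL', idY2 k N L L' hL', idY34 k N L L' hL,
    idZ k N L]
end
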